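/- arXiv:1502.07457 — 9 statements merged into one kernel-verified Lean document; each statement's English description precedes it below -/
import Mathlib

section
/- Let p and q be distinct primes congruent to 1 mod 4 with Legendre symbol (p/q) = -1. Then the Pell-type equation x^2 - pq*y^2 = -1 has a solution in integers x, y. -/
/-!
Let `(x, y)` be the fundamental solution of `x² - pq y² = 1`. As `pq ≡ 1 (mod 4)`, `x` is odd and
`y` even, and `(x - 1)/2 · (x + 1)/2 = pq (y/2)²` with coprime factors, so `(x - 1)/2 = d u²` and
`(x + 1)/2 = e v²` with `de = pq` and `e v² - d u² = 1`. If `e = 1`, then `(v, u)` is a smaller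
solution of the `+1` equation; if `{d, e} = {p, q}`, then `p` or `-p` is a square mod `q`, which
contradicts `(p/q) = -1` because `-1` is a square mod `q`. Hence `d = 1`, and `u² - pq v² = -1`.
-/

theorem Squarefree.isUnit_of_isSquare {R : Type*} [Monoid R] {x : R} (hx : Squarefree x)
    (h : IsSquare x) : IsUnit x := by
  obtain ⟨r, rfl⟩ := h
  exact (hx r dvd_rfl).mul (hx r dvd_rfl)

theorem Int.not_isSquare_mul_of_prime_of_ne {p q : ℕ} (hp : p.Prime) (hq : q.Prime)
    (hpq : p ≠ q) : ¬IsSquare ((p : ℤ) * q) := by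
  intro h
  have hsf : Squarefree ((p * q : ℕ) : ℤ) := Int.squarefree_natCast.mpr <|
    Nat.squarefree_mul_iff.mpr
      ⟨(Nat.coprime_primes hp hq).mpr hpq, hp.prime.squarefree, hq.prime.squarefree⟩
  have hunit := hsf.isUnit_of_isSquare (by exact_mod_cast h)
  rw [Int.ofNat_isUnit, Nat.isUnit_iff, mul_eq_one] at hunit
  exact hp.ne_one hunit.1

theorem Nat.eq_of_mul_eq_prime_mul_prime {p q d e : ℕ} (hp : p.Prime) (hq : q.Prime)
    (h : d * e = p * q) :
    d = 1 ∧ e = p * q ∨ d = p ∧ e = q ∨ d = q ∧ e = p ∨ d = p * q ∧ e = 1 := by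
  obtain ⟨d₁, d₂, hd₁, hd₂, rfl⟩ := Nat.dvd_mul.mp (Dvd.intro e h)
  rcases (Nat.dvd_prime hp).mp hd₁ with h₁ | h₁ <;>
    rcases (Nat.dvd_prime hq).mp hd₂ with h₂ | h₂ <;> subst d₁ d₂
  · exact .inl ⟨rfl, by simpa using h⟩
  · exact .inr <| .inr <| .inl ⟨one_mul q, Nat.eq_of_mul_eq_mul_left hq.pos (by linarith)⟩
  · exact .inr <| .inl ⟨mul_one p, Nat.eq_of_mul_eq_mul_left hp.pos (by linarith)⟩
  · exact .inr <| .inr <| .inr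
      ⟨rfl, Nat.eq_of_mul_eq_mul_left (Nat.mul_pos hp.pos hq.pos) (by linarith)⟩

theorem Nat.exists_eq_mul_sq_of_mul_succ_eq_mul_sq {k N m : ℕ} (hN : 0 < N)
    (h : k * (k + 1) = N * m ^ 2) :
    ∃ d e u v : ℕ, d * e = N ∧ k = d * u ^ 2 ∧ k + 1 = e * v ^ 2 := by
  have hcop : k.Coprime (k + 1) := Nat.coprime_self_add_right.mpr (Nat.coprime_one_right k)
  obtain ⟨a, ha⟩ := Nat.gcd_dvd_right N k
  obtain ⟨b, hb⟩ := Nat.gcd_dvd_right N (k + 1)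
  have hde : N.gcd k * N.gcd (k + 1) = N := by
    rw [← hcop.gcd_mul N, h]
    exact Nat.gcd_eq_left (dvd_mul_right N _)
  have hab : a * b = m ^ 2 := by
    refine Nat.eq_of_mul_eq_mul_left hN ?_
    calc N * (a * b) = N.gcd k * N.gcd (k + 1) * (a * b) := by rw [hde]
      _ = (N.gcd k * a) * (N.gcd (k + 1) * b) := by ring
      _ = N * m ^ 2 := by rw [← ha, ← hb, h]
  have hcop' : a.Coprime b :=
    (hcop.coprime_dvd_left (Dvd.intro_left _ ha.symm)).coprime_dvd_right
      (Dvd.intro_left _ hb.symm)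
  obtain ⟨u, hu⟩ := exists_eq_pow_of_mul_eq_pow (Nat.isUnit_iff.mpr hcop') hab
  obtain ⟨v, hv⟩ :=
    exists_eq_pow_of_mul_eq_pow (Nat.isUnit_iff.mpr hcop'.symm) ((mul_comm b a).trans hab)
  exact ⟨_, _, u, v, hde, hu ▸ ha, hv ▸ hb⟩

theorem Nat.odd_and_even_of_sq_eq_mul_sq_add_one {N x y : ℕ} (hN : N % 4 = 1)
    (h : x ^ 2 = N * y ^ 2 + 1) : Odd x ∧ Even y := by
  obtain ⟨n, rfl⟩ : ∃ n, N = 4 * n + 1 := ⟨N / 4, by omega⟩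
  rcases Nat.even_or_odd' x with ⟨k, rfl | rfl⟩ <;>
    rcases Nat.even_or_odd' y with ⟨m, rfl | rfl⟩
  all_goals first
    | exact ⟨odd_two_mul_add_one k, even_two_mul m⟩
    | (exfalso; ring_nf at h; omega)

theorem Nat.exists_mul_sq_of_sq_eq_mul_sq_add_one {N x y : ℕ} (hN : N % 4 = 1)
    (h : x ^ 2 = N * y ^ 2 + 1) :
    ∃ d e u v : ℕ, d * e = N ∧ e * v ^ 2 = d * u ^ 2 + 1 ∧ x = d * u ^ 2 + e * v ^ 2 := by
  obtain ⟨⟨k, rfl⟩, ⟨m, rfl⟩⟩ := odd_and_even_of_sq_eq_mul_sq_add_one hN h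
  have hk : k * (k + 1) = N * m ^ 2 := by nlinarith
  obtain ⟨d, e, u, v, hde, hu, hv⟩ := exists_eq_mul_sq_of_mul_succ_eq_mul_sq (by omega) hk
  exact ⟨d, e, u, v, hde, by omega, by omega⟩

theorem legendreSym.not_dvd_one_sub_mul_sq {p : ℕ} [Fact p.Prime] {a : ℤ}
    (h : legendreSym p a = -1) (y : ℤ) : ¬(p : ℤ) ∣ 1 - a * y ^ 2 := fun hdvd =>
  (Nat.prime_iff_prime_int.mp Fact.out).not_dvd_one
    (legendreSym.prime_dvd_of_eq_neg_one h (x := 1) (by simpa using hdvd)).1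

namespace Pell.IsFundamental

variable {d : ℤ} {a : Solution₁ d}

theorem x_le_abs (ha : IsFundamental a) {x y : ℤ} (h : x ^ 2 - d * y ^ 2 = 1) (hy : y ≠ 0) :
    a.x ≤ |x| := by
  have hx : 1 < |x| := by
    have : 0 < d * y ^ 2 := mul_pos ha.d_pos (by positivity)
    rw [← one_lt_sq_iff_one_lt_abs]
    linarith
  exact ha.x_le_x (a := .mk |x| y (by rwa [sq_abs])) hx

theorem x_ne_mul_sq_add_sq (ha : IsFundamental a) {u v : ℤ} (h : v ^ 2 - d * u ^ 2 = 1) :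
    a.x ≠ d * u ^ 2 + v ^ 2 := by
  intro hx
  rcases eq_or_ne u 0 with rfl | hu
  · linarith [ha.1]
  have hxv := ha.x_le_abs h hu
  have : 0 < d * u ^ 2 := mul_pos ha.d_pos (by positivity)
  nlinarith [sq_abs v, ha.1]

end Pell.IsFundamental

theorem pell_neg_one_of_legendre_neg_one (p q : ℕ) [Fact p.Prime] [Fact q.Prime]
    (hp4 : p % 4 = 1) (hq4 : q % 4 = 1) (hpq : p ≠ q)
    (hleg : legendreSym q p = -1) :
    ∃ x y : ℤ, x ^ 2 - (p * q : ℤ) * y ^ 2 = -1 := by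
  have hp : p.Prime := Fact.out
  have hq : q.Prime := Fact.out
  obtain ⟨a, ha⟩ := Pell.IsFundamental.exists_of_not_isSquare
    (by exact_mod_cast Nat.mul_pos hp.pos hq.pos) (Int.not_isSquare_mul_of_prime_of_ne hp hq hpq)
  have hsol : a.x.natAbs ^ 2 = p * q * a.y.natAbs ^ 2 + 1 := by
    zify
    simp only [sq_abs]
    linear_combination a.prop
  obtain ⟨d, e, u, v, hde, huv, hx⟩ :=
    Nat.exists_mul_sq_of_sq_eq_mul_sq_add_one (by simp [Nat.mul_mod, hp4, hq4]) hsol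
  have huv' : (e : ℤ) * v ^ 2 = d * u ^ 2 + 1 := by exact_mod_cast huv
  have hleg_neg : legendreSym q (-p) = -1 := by
    rw [legendreSym.at_neg (by omega), ZMod.χ₄_nat_one_mod_four hq4, hleg, one_mul]
  rcases Nat.eq_of_mul_eq_prime_mul_prime hp hq hde with
    ⟨rfl, rfl⟩ | ⟨rfl, rfl⟩ | ⟨rfl, rfl⟩ | ⟨rfl, rfl⟩
  · exact ⟨u, v, by push_cast at huv'; linear_combination -huv'⟩
  · exact absurd ⟨v ^ 2, by linear_combination -huv'⟩
      (legendreSym.not_dvd_one_sub_mul_sq hleg_neg u)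
  · exact absurd ⟨-u ^ 2, by linear_combination -huv'⟩ (legendreSym.not_dvd_one_sub_mul_sq hleg v)
  · refine absurd ?_ (ha.x_ne_mul_sq_add_sq (u := u) (v := v)
      (by push_cast at huv'; linear_combination huv'))
    rw [← Int.natAbs_of_nonneg ha.x_pos.le, hx]
    push_cast
    ring
end

section
/- Let p and q be distinct primes congruent to 1 mod 4 with (p/q) = 1 and biquadratic residue symbols (p/q)_4 = (q/p)_4 = -1. Then the equation x^2 - pq*y^2 = -1 has a solution in integers x, y. -/
open scoped NumberTheorySymbols
open jacobiSym

lemma sq_zmod4 (n : ℕ) : (n : ZMod 4) ^ 2 = if n % 2 = 0 then 0 else 1 := by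
  have h2 : n % 2 = n % 4 % 2 := (Nat.mod_mod_of_dvd n (by norm_num)).symm
  rw [← ZMod.natCast_mod n 4, h2]
  have h : n % 4 = 0 ∨ n % 4 = 1 ∨ n % 4 = 2 ∨ n % 4 = 3 := by omega
  rcases h with h | h | h | h <;> rw [h] <;> decide

lemma sq_zmod8_odd (n : ℕ) (hn : n % 2 = 1) : (n : ZMod 8) ^ 2 = 1 := by
  rw [← ZMod.natCast_mod n 8]
  have h : n % 8 = 1 ∨ n % 8 = 3 ∨ n % 8 = 5 ∨ n % 8 = 7 := by omega
  rcases h with h | h | h | h <;> rw [h] <;> decide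

lemma quartic_key (p q a b : ℕ) [Fact p.Prime] [Fact q.Prime]
    (hp4 : p % 4 = 1) (hq4 : q % 4 = 1)
    (hab : Nat.Coprime a b) (h : q * b ^ 2 = p * a ^ 2 + 1) :
    ∃ z : ZMod q, z ^ 4 = (p : ZMod q) := by
  have hp := (Fact.out : p.Prime)
  have hq := (Fact.out : q.Prime)
  have hq2 : q % 2 = 1 := by omega
  have ha0 : a ≠ 0 := by
    rintro rfl
    have := hq.two_le
    have h1 : q = 1 := Nat.dvd_one.mp ⟨b ^ 2, by simpa using h.symm⟩
    omega
  -- parity : a even, b odd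
  have hparity : a % 2 = 0 ∧ b % 2 = 1 := by
    have h4 : ((q * b ^ 2 : ℕ) : ZMod 4) = ((p * a ^ 2 + 1 : ℕ) : ZMod 4) := by rw [h]
    push_cast at h4
    have hp4' : (p : ZMod 4) = 1 := by rw [← ZMod.natCast_mod p 4, hp4]; rfl
    have hq4' : (q : ZMod 4) = 1 := by rw [← ZMod.natCast_mod q 4, hq4]; rfl
    rw [hp4', hq4', one_mul, one_mul, sq_zmod4, sq_zmod4] at h4
    rcases Nat.mod_two_eq_zero_or_one a with haa | haa <;>
      rcases Nat.mod_two_eq_zero_or_one b with hbb | hbb <;>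
      simp [haa, hbb] at h4 <;> first
        | exact absurd h4 (by decide)
        | exact ⟨haa, hbb⟩
  obtain ⟨ha2, hb2⟩ := hparity
  -- decompose a = 2^s * c with c odd
  obtain ⟨s, c, hc, rfl⟩ := Nat.exists_eq_pow_mul_and_not_dvd ha0 2 (by norm_num)
  have hcodd : c % 2 = 1 := Nat.two_dvd_ne_zero.mp hc
  have hs1 : 1 ≤ s := by
    by_contra hs
    push_neg at hs
    interval_cases s
    simp at ha2
    omega
  have hc0 : c ≠ 0 := by omega
  have hbc : Nat.Coprime b c :=
    (Nat.Coprime.coprime_dvd_left (dvd_mul_left c (2^s)) hab).symm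
  -- q ∤ a
  have hqa : ¬ (q ∣ 2 ^ s * c) := by
    intro hd
    have h1 : q ∣ p * (2 ^ s * c) ^ 2 := Dvd.dvd.mul_left (dvd_pow hd two_ne_zero) p
    have h2 : q ∣ p * (2 ^ s * c) ^ 2 + 1 := by
      rw [← h]; exact Dvd.dvd.mul_right (dvd_refl q) _
    have h3 : q ∣ 1 := (Nat.dvd_add_right h1).mp h2
    have h4 : q = 1 := Nat.dvd_one.mp h3
    have := hq.two_le
    omega
  -- J(c | q) = 1
  have hJc : J((c : ℤ) | q) = 1 := by
    have h1 : J((c:ℤ) | q) = J((q:ℤ) | c) :=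
      jacobiSym.quadratic_reciprocity_one_mod_four' (Nat.odd_iff.mpr hcodd) hq4
    have hcd : c ∣ p * (2 ^ s * c) ^ 2 := Dvd.dvd.mul_left (dvd_pow (dvd_mul_left c (2^s)) two_ne_zero) p
    obtain ⟨k, hk⟩ := hcd
    have h3 : J(((q * b ^ 2 : ℕ) : ℤ) | c) = 1 := by
      rw [h]
      push_cast [hk]
      rw [jacobiSym.mod_left' (show ((c:ℤ) * (k:ℤ) + 1) % (c:ℕ) = 1 % (c:ℕ) from by
        rw [add_comm]; apply Int.add_mul_emod_self_left), jacobiSym.one_left]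
    have h4 : J((b:ℤ) | c) ^ 2 = 1 := jacobiSym.sq_one (by
      rw [Int.gcd_natCast_natCast]; exact hbc)
    have h5 : J((q:ℤ) | c) * J((b:ℤ) | c) ^ 2 = 1 := by
      rw [← jacobiSym.pow_left, ← jacobiSym.mul_left]
      push_cast at h3 ⊢
      exact h3
    rw [h4, mul_one] at h5
    rw [h1, h5]
  -- legendre symbol of a
  have hJa : legendreSym q ((2 ^ s * c : ℕ) : ℤ) = ZMod.χ₈ (q : ZMod 8) ^ s := by
    rw [legendreSym.to_jacobiSym]
    push_cast
    rw [jacobiSym.mul_left, jacobiSym.pow_left, jacobiSym.at_two (Nat.odd_iff.mpr hq2), hJc, mul_one]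
  -- u and its power
  set u : ZMod q := ((2 ^ s * c : ℕ) : ZMod q) with hu_def
  have hune : u ≠ 0 := by
    rw [hu_def, Ne, ZMod.natCast_eq_zero_iff]
    exact hqa
  have hupow : u ^ (q / 2) = ((ZMod.χ₈ (q : ZMod 8) ^ s : ℤ) : ZMod q) := by
    have h1 := legendreSym.eq_pow q ((2 ^ s * c : ℕ) : ℤ)
    rw [hJa] at h1
    have h2 : (((2 ^ s * c : ℕ) : ℤ) : ZMod q) = u := by rw [Int.cast_natCast]
    rw [h2] at h1
    exact h1.symm
  -- i with i^2 = -1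
  obtain ⟨i, hi⟩ := ZMod.exists_sq_eq_neg_one_iff.mpr (show q % 4 ≠ 3 by omega)
  have hi2 : i ^ 2 = -1 := by rw [pow_two, ← hi]
  -- epsilon
  obtain ⟨ε, huE, hiE, hee⟩ : ∃ ε : ZMod q, u ^ (q / 2) = ε ∧ i ^ (q / 2) = ε ∧ ε * ε = 1 := by
    rcases Nat.lt_or_ge s 2 with hslt | hsge
    · -- s = 1 : q % 8 = 5
      have hseq : s = 1 := by omega
      subst hseq
      have hq8 : q % 8 = 5 := by
        have h8 : ((q * b ^ 2 : ℕ) : ZMod 8) = ((p * (4 * c ^ 2) + 1 : ℕ) : ZMod 8) := by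
          rw [h]; norm_num; ring_nf
        push_cast at h8
        rw [sq_zmod8_odd b hb2, sq_zmod8_odd c hcodd, mul_one, mul_one] at h8
        have hp8 : (p : ZMod 8) = 1 ∨ (p : ZMod 8) = 5 := by
          have : p % 8 = 1 ∨ p % 8 = 5 := by omega
          rcases this with h' | h' <;> [left; right] <;> rw [← ZMod.natCast_mod p 8, h'] <;> rfl
        have hq5 : (q : ZMod 8) = 5 := by
          rcases hp8 with h' | h' <;> rw [h'] at h8 <;> rw [h8] <;> decide
        have hv : (q : ZMod 8).val = 5 := by rw [hq5]; rfl
        rwa [ZMod.val_natCast] at hv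
      refine ⟨-1, ?_, ?_, by ring⟩
      · rw [hupow]
        have hχ : ZMod.χ₈ (q : ZMod 8) = -1 := by
          have : (q : ZMod 8) = 5 := by rw [← ZMod.natCast_mod q 8, hq8]; rfl
          rw [this]; decide
        rw [hχ]; push_cast; ring
      · obtain ⟨k, hk⟩ : ∃ k, q = 8 * k + 5 := ⟨q / 8, by omega⟩
        have hE : q / 2 = 2 * (2 * k + 1) := by omega
        rw [hE, pow_mul, hi2]
        exact Odd.neg_one_pow ⟨k, by ring⟩
    · -- s ≥ 2 : q % 8 = 1
      have hq8 : q % 8 = 1 := by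
        obtain ⟨d, hd⟩ : ∃ d, 2 ^ s * c = 4 * d := ⟨2 ^ (s - 2) * c, by
          rw [← mul_assoc, show (4 : ℕ) = 2 ^ 2 by norm_num, ← pow_add]
          congr 2
          omega⟩
        have h8d : (8 : ℕ) ∣ (2 ^ s * c) ^ 2 := by
          rw [hd]
          exact ⟨2 * d ^ 2, by ring⟩
        obtain ⟨e, he⟩ := h8d
        have h8 : ((q * b ^ 2 : ℕ) : ZMod 8) = ((p * (8 * e) + 1 : ℕ) : ZMod 8) := by
          rw [h, he]
        push_cast at h8
        rw [sq_zmod8_odd b hb2, mul_one] at h8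
        have hq1 : (q : ZMod 8) = 1 := by
          rw [h8, show (8 : ZMod 8) = 0 from by decide]
          ring
        have hv : (q : ZMod 8).val = 1 := by rw [hq1]; rfl
        rwa [ZMod.val_natCast] at hv
      refine ⟨1, ?_, ?_, by ring⟩
      · rw [hupow]
        have hχ : ZMod.χ₈ (q : ZMod 8) = 1 := by
          have : (q : ZMod 8) = 1 := by rw [← ZMod.natCast_mod q 8, hq8]; rfl
          rw [this]; decide
        rw [hχ]; push_cast; ring
      · obtain ⟨k, hk⟩ : ∃ k, q = 8 * k + 1 := ⟨q / 8, by omega⟩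
        have hE : q / 2 = 2 * (2 * k) := by omega
        rw [hE, pow_mul, hi2]
        exact Even.neg_one_pow ⟨k, by ring⟩
  -- p = w^2 with w = i * u⁻¹
  have hpu : (p : ZMod q) * u ^ 2 = -1 := by
    have hcast : ((q * b ^ 2 : ℕ) : ZMod q) = ((p * (2 ^ s * c) ^ 2 + 1 : ℕ) : ZMod q) := by rw [h]
    push_cast at hcast
    rw [ZMod.natCast_self, zero_mul] at hcast
    have : (p : ZMod q) * u ^ 2 + 1 = 0 := by
      rw [hu_def]; push_cast; linear_combination -hcast
    linear_combination this
  set w : ZMod q := i * u⁻¹ with hw_def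
  have hw2 : w ^ 2 = (p : ZMod q) := by
    have hcancel : w ^ 2 * u ^ 2 = (p : ZMod q) * u ^ 2 := by
      have huu : u⁻¹ * u = 1 := inv_mul_cancel₀ hune
      calc w ^ 2 * u ^ 2 = i ^ 2 * (u⁻¹ * u) ^ 2 := by rw [hw_def]; ring
        _ = i ^ 2 := by rw [huu]; ring
        _ = (p : ZMod q) * u ^ 2 := by rw [hi2, hpu]
    exact mul_right_cancel₀ (pow_ne_zero 2 hune) hcancel
  have hine : i ≠ 0 := by
    intro h0
    have h1 : (0 : ZMod q) ^ 2 = (0 : ZMod q) := by ring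
    rw [h0, h1] at hi2
    exact one_ne_zero (by linear_combination hi2 : (1 : ZMod q) = 0)
  have hwne : w ≠ 0 := mul_ne_zero hine (inv_ne_zero hune)
  have hwE : w ^ (q / 2) = 1 := by
    have hinv : (ε)⁻¹ = ε := inv_eq_of_mul_eq_one_right hee
    calc w ^ (q / 2) = i ^ (q / 2) * (u ^ (q / 2))⁻¹ := by rw [hw_def, mul_pow, inv_pow]
      _ = ε * ε⁻¹ := by rw [hiE, huE]
      _ = 1 := by rw [hinv]; exact hee
  obtain ⟨r, hr⟩ := (ZMod.euler_criterion q hwne).mpr hwE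
  refine ⟨r, ?_⟩
  have : r ^ 4 = (r * r) ^ 2 := by ring
  rw [this, ← hr, hw2]

theorem pell_neg_one_of_biquadratic_neg_one (p q : ℕ) [Fact p.Prime] [Fact q.Prime]
    (hp4 : p % 4 = 1) (hq4 : q % 4 = 1) (hpq : p ≠ q)
    (hleg : legendreSym q p = 1)
    (hpq4 : ¬ ∃ z : ZMod q, z ^ 4 = (p : ZMod q))
    (hqp4 : ¬ ∃ z : ZMod p, z ^ 4 = (q : ZMod p)) :
    ∃ x y : ℤ, x ^ 2 - (p * q : ℤ) * y ^ 2 = -1 := by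
  have hp := (Fact.out : p.Prime)
  have hq := (Fact.out : q.Prime)
  have hpq0 : 0 < p * q := Nat.mul_pos hp.pos hq.pos
  -- p*q is not a square
  have hD : ¬ IsSquare ((p * q : ℕ) : ℤ) := by
    rw [Int.isSquare_natCast_iff]
    rintro ⟨r, hr⟩
    have hpr : p ∣ r := hp.dvd_of_dvd_pow (n := 2) (by rw [sq, ← hr]; exact dvd_mul_right _ _)
    obtain ⟨r', rfl⟩ := hpr
    have hq' : q = p * r' ^ 2 := by
      have hp0 : 0 < p := hp.pos
      nlinarith [hr]
    have : p ∣ q := ⟨r' ^ 2, hq'⟩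
    exact hpq ((Nat.prime_dvd_prime_iff_eq hp hq).mp this)
  obtain ⟨x₀, y₀, hxy₀, hy₀⟩ := Pell.exists_of_not_isSquare
    (by exact_mod_cast hpq0 : (0:ℤ) < ((p*q : ℕ) : ℤ)) hD
  -- convert to ℕ
  have hex : ∃ x : ℕ, 1 < x ∧ ∃ y : ℕ, 0 < y ∧ x ^ 2 = p * q * y ^ 2 + 1 := by
    have hy0n : 0 < y₀.natAbs := Int.natAbs_pos.mpr hy₀
    have heq : (x₀.natAbs : ℤ) ^ 2 = (p*q : ℕ) * (y₀.natAbs : ℤ) ^ 2 + 1 := by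
      rw [Int.natAbs_sq x₀, Int.natAbs_sq y₀]
      linarith [hxy₀]
    have heqn : x₀.natAbs ^ 2 = p * q * y₀.natAbs ^ 2 + 1 := by exact_mod_cast heq
    refine ⟨x₀.natAbs, ?_, y₀.natAbs, hy0n, heqn⟩
    by_contra hle
    push_neg at hle
    have h1 : 0 < p * q * y₀.natAbs ^ 2 := by positivity
    have h3 : x₀.natAbs ^ 2 ≤ 1 * 1 := by
      calc x₀.natAbs ^ 2 = x₀.natAbs * x₀.natAbs := sq x₀.natAbs
        _ ≤ 1 * 1 := Nat.mul_le_mul hle hle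
    linarith
  classical
  obtain ⟨hx1, y, hy, hxy⟩ := Nat.find_spec hex
  set x := Nat.find hex with hxdef
  -- x is odd, y is even
  have hmod4 : ((x : ZMod 4)) ^ 2 = (y : ZMod 4) ^ 2 + 1 := by
    have h4 : ((x ^ 2 : ℕ) : ZMod 4) = ((p * q * y ^ 2 + 1 : ℕ) : ZMod 4) := by rw [hxy]
    push_cast at h4
    have hp4' : (p : ZMod 4) = 1 := by rw [← ZMod.natCast_mod p 4, hp4]; rfl
    have hq4' : (q : ZMod 4) = 1 := by rw [← ZMod.natCast_mod q 4, hq4]; rfl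
    rw [hp4', hq4'] at h4; rw [h4]; ring
  have hx2 : x % 2 = 1 ∧ y % 2 = 0 := by
    rw [sq_zmod4, sq_zmod4] at hmod4
    rcases Nat.mod_two_eq_zero_or_one x with hx | hx <;>
      rcases Nat.mod_two_eq_zero_or_one y with hy2 | hy2 <;>
      simp [hx, hy2] at hmod4 <;> first
        | exact absurd hmod4 (by decide)
        | exact ⟨hx, hy2⟩
  obtain ⟨hxodd, hyeven⟩ := hx2
  -- write x = 2m+1, y = 2z
  obtain ⟨m, hm⟩ : ∃ m, x = 2 * m + 1 := ⟨x / 2, by omega⟩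
  obtain ⟨z, hz⟩ : ∃ z, y = 2 * z := ⟨y / 2, by omega⟩
  have hm1 : 1 ≤ m := by omega
  have hz1 : 1 ≤ z := by omega
  have hfac : m * (m + 1) = p * q * z ^ 2 := by
    have h4 : (2*m+1) ^ 2 = p * q * (2*z) ^ 2 + 1 := by rw [← hm, ← hz]; exact hxy
    have h4' : ((2*m+1 : ℕ) : ℤ) ^ 2 = ((p * q * (2*z) ^ 2 + 1 : ℕ) : ℤ) := by exact_mod_cast h4
    push_cast at h4'
    have h5 : (4 : ℤ) * ((m:ℤ) * (m + 1)) = 4 * ((p:ℤ) * q * z ^ 2) := by linear_combination h4'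
    have h6 : (m:ℤ) * (m+1) = (p:ℤ) * q * z ^ 2 := by linarith
    exact_mod_cast h6
  have hco : Nat.Coprime m (m + 1) := by
    have := Nat.gcd_add_self_left 1 m
    simpa [Nat.Coprime, Nat.gcd_comm m (m+1)] using this
  -- square decompositions
  have decomp : ∀ u v : ℕ, Nat.Coprime u v → u * v = z ^ 2 →
      ∃ a b2, u = a ^ 2 ∧ v = b2 ^ 2 := by
    intro u v huv huvz
    obtain ⟨a, ha⟩ := exists_eq_pow_of_mul_eq_pow
      (by rw [gcd_eq_nat_gcd]; exact huv ▸ isUnit_one) huvz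
    obtain ⟨b2, hb2⟩ := exists_eq_pow_of_mul_eq_pow
      (a := v) (b := u) (by rw [gcd_eq_nat_gcd]; exact huv.symm ▸ isUnit_one)
      (by rw [mul_comm] at huvz; exact huvz)
    exact ⟨a, b2, ha, hb2⟩
  have hpd : p ∣ m ∨ p ∣ (m+1) := by
    refine (Nat.Prime.dvd_mul hp).mp ?_
    rw [hfac]; exact Dvd.dvd.mul_right (dvd_mul_right p q) _
  have hqd : q ∣ m ∨ q ∣ (m+1) := by
    refine (Nat.Prime.dvd_mul hq).mp ?_
    rw [hfac]; exact Dvd.dvd.mul_right (dvd_mul_left q p) _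
  have hppos := hp.pos
  have hqpos := hq.pos
  rcases hpd with hpm | hpm1 <;> rcases hqd with hqm | hqm1
  · -- Case A : p ∣ m, q ∣ m : contradiction with minimality
    exfalso
    have hpqm : p * q ∣ m := Nat.Coprime.mul_dvd_of_dvd_of_dvd
      ((Nat.coprime_primes hp hq).mpr hpq) hpm hqm
    obtain ⟨m₀, hm₀⟩ := hpqm
    have hm₀eq : m₀ * (m+1) = z ^ 2 := by
      have : p * q * (m₀ * (m+1)) = p * q * z ^ 2 := by rw [← hfac, hm₀]; ring
      exact Nat.eq_of_mul_eq_mul_left hpq0 this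
    have hcom : Nat.Coprime m₀ (m+1) := Nat.Coprime.coprime_dvd_left ⟨p*q, by rw [hm₀]; ring⟩ hco
    obtain ⟨a, b, ha, hb⟩ := decomp m₀ (m+1) hcom hm₀eq
    -- b^2 = m+1 = p*q*a^2 + 1, and b < x : contradiction
    have hkey : b ^ 2 = p * q * a ^ 2 + 1 := by rw [← hb, ← ha, ← hm₀]
    have ha0 : 0 < a := by
      rcases Nat.eq_zero_or_pos a with h0 | h0
      · exfalso; rw [h0] at ha; simp at ha; rw [ha, mul_zero] at hm₀; omega
      · exact h0
    have hb1 : 1 < b := by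
      have h1 : 0 < p * q * a ^ 2 := by positivity
      by_contra hble
      push_neg at hble
      have h3 : b ^ 2 ≤ 1 * 1 := by
        calc b ^ 2 = b * b := sq b
          _ ≤ 1 * 1 := Nat.mul_le_mul hble hble
      linarith
    have hbx : b < x := by
      have h1 : b ^ 2 = m + 1 := hb.symm
      have hbb : 1 * b < b * b := mul_lt_mul_of_pos_right hb1 (by omega)
      have hbsq : b ^ 2 = b * b := sq b
      omega
    exact Nat.find_min hex hbx ⟨hb1, a, ha0, hkey⟩
  · -- Case C' : p ∣ m, q ∣ m+1 : q*b^2 = p*a^2+1, contradiction with hpq4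
    exfalso
    obtain ⟨m₀, hm₀⟩ := hpm
    obtain ⟨n₀, hn₀⟩ := hqm1
    have hmn : m₀ * n₀ = z ^ 2 := by
      have : p * q * (m₀ * n₀) = p * q * z ^ 2 := by rw [← hfac, hn₀, hm₀]; ring
      exact Nat.eq_of_mul_eq_mul_left hpq0 this
    have hcomn : Nat.Coprime m₀ n₀ :=
      Nat.Coprime.coprime_dvd_left ⟨p, by rw [hm₀]; ring⟩
        (Nat.Coprime.coprime_dvd_right ⟨q, by rw [hn₀]; ring⟩ hco)
    obtain ⟨a, b, ha, hb⟩ := decomp m₀ n₀ hcomn hmn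
    have heq2 : q * b ^ 2 = p * a ^ 2 + 1 := by rw [← hb, ← ha, ← hn₀, ← hm₀]
    have hab : Nat.Coprime a b := by
      have := hcomn
      rw [ha, hb] at this
      exact (Nat.coprime_pow_left_iff two_pos _ _).mp ((Nat.coprime_pow_right_iff two_pos _ _).mp this)
    exact hpq4 (quartic_key p q a b hp4 hq4 hab heq2)
  · -- Case B' : q ∣ m, p ∣ m+1 : p*a^2 = q*b^2+1, contradiction with hqp4
    exfalso
    obtain ⟨m₀, hm₀⟩ := hqm
    obtain ⟨n₀, hn₀⟩ := hpm1
    have hmn : m₀ * n₀ = z ^ 2 := by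
      have : p * q * (m₀ * n₀) = p * q * z ^ 2 := by rw [← hfac, hn₀, hm₀]; ring
      exact Nat.eq_of_mul_eq_mul_left hpq0 this
    have hcomn : Nat.Coprime m₀ n₀ :=
      Nat.Coprime.coprime_dvd_left ⟨q, by rw [hm₀]; ring⟩
        (Nat.Coprime.coprime_dvd_right ⟨p, by rw [hn₀]; ring⟩ hco)
    obtain ⟨b, a, hb, ha⟩ := decomp m₀ n₀ hcomn hmn
    have heq2 : p * a ^ 2 = q * b ^ 2 + 1 := by rw [← hb, ← ha, ← hn₀, ← hm₀]
    have hab : Nat.Coprime b a := by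
      have := hcomn
      rw [ha, hb] at this
      exact (Nat.coprime_pow_left_iff two_pos _ _).mp ((Nat.coprime_pow_right_iff two_pos _ _).mp this)
    exact hqp4 (quartic_key q p b a hq4 hp4 hab heq2)
  · -- Case D : p ∣ m+1, q ∣ m+1 : negative Pell solvable!
    have hpqm : p * q ∣ (m+1) := Nat.Coprime.mul_dvd_of_dvd_of_dvd
      ((Nat.coprime_primes hp hq).mpr hpq) hpm1 hqm1
    obtain ⟨n₀, hn₀⟩ := hpqm
    have hmn : m * n₀ = z ^ 2 := by
      have : p * q * (m * n₀) = p * q * z ^ 2 := by rw [← hfac, hn₀]; ring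
      exact Nat.eq_of_mul_eq_mul_left hpq0 this
    have hcomn : Nat.Coprime m n₀ :=
      Nat.Coprime.coprime_dvd_right ⟨p*q, by rw [hn₀]; ring⟩ hco
    obtain ⟨a, b, ha, hb⟩ := decomp m n₀ hcomn hmn
    refine ⟨a, b, ?_⟩
    have : a ^ 2 + 1 = p * q * b ^ 2 := by rw [← ha, ← hb, ← hn₀]
    have hz' : ((a:ℤ) ^ 2 + 1 : ℤ) = (p:ℤ) * q * (b:ℤ) ^ 2 := by exact_mod_cast this
    linarith
end

section
/- Let p and q be distinct primes congruent to 1 mod 4 such that either (p/q) = -1, or (p/q)_4 = -1. Then the equation x^2 + q*y^2 = -1 has a solution in the ring of integers O_F of F = Q(√(-p)). -/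
open NumberField

lemma nat_sq_of_coprime {A B v : ℕ} (h : Nat.Coprime A B) (heq : A * B = v ^ 2) :
    ∃ a, A = a ^ 2 := by
  have hc : IsCoprime (A : ℤ) (B : ℤ) := Nat.Coprime.isCoprime h
  have heq' : (A : ℤ) * B = (v : ℤ) ^ 2 := by exact_mod_cast heq
  obtain ⟨a0, ha0 | ha0⟩ := Int.sq_of_isCoprime hc heq'
  · refine ⟨a0.natAbs, ?_⟩
    have : ((a0.natAbs : ℤ)) ^ 2 = (A : ℤ) := by
      rw [ha0, sq, sq]; exact_mod_cast Int.natAbs_mul_self (a := a0)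
    exact_mod_cast this.symm
  · refine ⟨0, ?_⟩
    have h1 : (A : ℤ) ≤ 0 := by rw [ha0]; simp [sq_nonneg]
    have h2 : (0 : ℤ) ≤ (A : ℤ) := by positivity
    have : (A : ℤ) = 0 := le_antisymm h1 h2
    simpa using this

lemma factorization4 {p q A B v : ℕ} (hp : p.Prime) (hq : q.Prime) (hpq : p ≠ q)
    (hAB : Nat.Coprime A B) (heq : A * B = p * q * v ^ 2) :
    (∃ a b, A = a ^ 2 ∧ B = p * q * b ^ 2) ∨ (∃ a b, A = p * q * a ^ 2 ∧ B = b ^ 2) ∨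
    (∃ a b, A = p * a ^ 2 ∧ B = q * b ^ 2) ∨ (∃ a b, A = q * a ^ 2 ∧ B = p * b ^ 2) := by
  have hppos : 0 < p := hp.pos
  have hqpos : 0 < q := hq.pos
  have hpA : p ∣ A ∨ p ∣ B := (Nat.Prime.dvd_mul hp).mp (heq ▸ ⟨q * v ^ 2, by ring⟩)
  have hqA : q ∣ A ∨ q ∣ B := (Nat.Prime.dvd_mul hq).mp (heq ▸ ⟨p * v ^ 2, by ring⟩)
  have hcoppq : Nat.Coprime p q := (Nat.coprime_primes hp hq).mpr hpq
  rcases hpA with hpA | hpA <;> rcases hqA with hqA | hqA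
  · -- p ∣ A, q ∣ A
    right; left
    have hpqA : p * q ∣ A := Nat.Coprime.mul_dvd_of_dvd_of_dvd hcoppq hpA hqA
    obtain ⟨A₁, hA₁⟩ := hpqA
    have hcan : A₁ * B = v ^ 2 := by
      have : p * q * (A₁ * B) = p * q * v ^ 2 := by rw [← heq, hA₁]; ring
      exact Nat.eq_of_mul_eq_mul_left (by positivity) this
    have hc1 : Nat.Coprime A₁ B := Nat.Coprime.coprime_dvd_left ⟨p * q, by rw [hA₁]; ring⟩ hAB
    obtain ⟨a, ha⟩ := nat_sq_of_coprime hc1 hcan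
    obtain ⟨b, hb⟩ := nat_sq_of_coprime hc1.symm (by rw [← hcan]; ring)
    exact ⟨a, b, by rw [hA₁, ha], hb⟩
  · -- p ∣ A, q ∣ B
    right; right; left
    obtain ⟨A₁, hA₁⟩ := hpA
    obtain ⟨B₁, hB₁⟩ := hqA
    have hcan : A₁ * B₁ = v ^ 2 := by
      have : (p * q) * (A₁ * B₁) = (p * q) * v ^ 2 := by rw [← heq, hA₁, hB₁]; ring
      exact Nat.eq_of_mul_eq_mul_left (by positivity) this
    have hc1 : Nat.Coprime A₁ B₁ :=
      Nat.Coprime.coprime_dvd_right ⟨q, by rw [hB₁]; ring⟩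
        (Nat.Coprime.coprime_dvd_left ⟨p, by rw [hA₁]; ring⟩ hAB)
    obtain ⟨a, ha⟩ := nat_sq_of_coprime hc1 hcan
    obtain ⟨b, hb⟩ := nat_sq_of_coprime hc1.symm (by rw [← hcan]; ring)
    exact ⟨a, b, by rw [hA₁, ha], by rw [hB₁, hb]⟩
  · -- q ∣ A, p ∣ B
    right; right; right
    obtain ⟨A₁, hA₁⟩ := hqA
    obtain ⟨B₁, hB₁⟩ := hpA
    have hcan : A₁ * B₁ = v ^ 2 := by
      have : (p * q) * (A₁ * B₁) = (p * q) * v ^ 2 := by rw [← heq, hA₁, hB₁]; ring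
      exact Nat.eq_of_mul_eq_mul_left (by positivity) this
    have hc1 : Nat.Coprime A₁ B₁ :=
      Nat.Coprime.coprime_dvd_right ⟨p, by rw [hB₁]; ring⟩
        (Nat.Coprime.coprime_dvd_left ⟨q, by rw [hA₁]; ring⟩ hAB)
    obtain ⟨a, ha⟩ := nat_sq_of_coprime hc1 hcan
    obtain ⟨b, hb⟩ := nat_sq_of_coprime hc1.symm (by rw [← hcan]; ring)
    exact ⟨a, b, by rw [hA₁, ha], by rw [hB₁, hb]⟩
  · -- p ∣ B, q ∣ B
    left
    have hpqB : p * q ∣ B := Nat.Coprime.mul_dvd_of_dvd_of_dvd hcoppq hpA hqA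
    obtain ⟨B₁, hB₁⟩ := hpqB
    have hcan : A * B₁ = v ^ 2 := by
      have : p * q * (A * B₁) = p * q * v ^ 2 := by rw [← heq, hB₁]; ring
      exact Nat.eq_of_mul_eq_mul_left (by positivity) this
    have hc1 : Nat.Coprime A B₁ := Nat.Coprime.coprime_dvd_right ⟨p * q, by rw [hB₁]; ring⟩ hAB
    obtain ⟨a, ha⟩ := nat_sq_of_coprime hc1 hcan
    obtain ⟨b, hb⟩ := nat_sq_of_coprime hc1.symm (by rw [← hcan]; ring)
    exact ⟨a, b, ha, by rw [hB₁, hb]⟩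

lemma quartic_of_pow_eq_one (q : ℕ) [Fact q.Prime] (hq : q % 4 = 1) {u : ZMod q}
    (hu : u ≠ 0) (h : u ^ ((q - 1) / 4) = 1) : ∃ z : ZMod q, z ^ 4 = u := by
  have hq5 : 5 ≤ q := by
    have := (Fact.out : q.Prime).two_le
    rcases Nat.lt_or_ge q 5 with h5 | h5
    · interval_cases q <;> simp_all <;> omega
    · exact h5
  obtain ⟨n, hn⟩ : ∃ n : ℕ, q - 1 = 4 * n := ⟨(q - 1) / 4, by omega⟩
  have hn0 : n ≠ 0 := by omega
  obtain ⟨g, hg⟩ := IsCyclic.exists_generator (α := (ZMod q)ˣ)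
  have horder : orderOf g = 4 * n := by
    rw [orderOf_eq_card_of_forall_mem_zpowers hg, Nat.card_eq_fintype_card, ZMod.card_units, hn]
  set pu : (ZMod q)ˣ := Units.mk0 u hu with hpu
  obtain ⟨k, hk⟩ := hg pu
  have hpun : pu ^ (n : ℤ) = 1 := by
    ext
    push_cast
    rw [hpu]
    simpa using (by rw [← h]; congr 1; omega : u ^ n = 1)
  have hdvd : ((4 * n : ℕ) : ℤ) ∣ k * n := by
    have hk' : g ^ k = pu := hk
    rw [← horder, orderOf_dvd_iff_zpow_eq_one, zpow_mul, hk', hpun]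
  obtain ⟨j, hj⟩ : (4 : ℤ) ∣ k := by
    obtain ⟨c, hc⟩ := hdvd
    refine ⟨c, ?_⟩
    have : (n : ℤ) ≠ 0 := by exact_mod_cast hn0
    have : k * n = 4 * c * n := by push_cast at hc; linarith [hc]
    exact mul_right_cancel₀ ‹(n:ℤ) ≠ 0› this
  refine ⟨((g ^ j : (ZMod q)ˣ) : ZMod q), ?_⟩
  have : (g ^ j) ^ (4 : ℕ) = pu := by
    have hk' : g ^ k = pu := hk
    rw [← hk', hj]
    rw [← zpow_natCast, ← zpow_mul]
    ring_nf
  calc ((g ^ j : (ZMod q)ˣ) : ZMod q) ^ 4 = (((g ^ j) ^ (4:ℕ) : (ZMod q)ˣ) : ZMod q) := by push_cast; ring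
    _ = u := by rw [this]; rfl

lemma odd_sq_mod8 {n : ℕ} (hn : n % 2 = 1) : n ^ 2 % 8 = 1 := by
  obtain ⟨c, hc⟩ : ∃ c, n = 2 * c + 1 := ⟨n / 2, by omega⟩
  have h1 : n ^ 2 = 4 * (c * (c + 1)) + 1 := by rw [hc]; ring
  obtain ⟨e, he⟩ := (Nat.even_mul_succ_self c)
  omega

lemma legendre_val (p q a b : ℕ) [Fact p.Prime] [Fact q.Prime]
    (hp4 : p % 4 = 1) (hq4 : q % 4 = 1)
    (hab : Nat.Coprime a b) (ha : a ≠ 0) (heq : q * b ^ 2 = p * a ^ 2 + 1) :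
    legendreSym q a = (-1) ^ ((q - 1) / 4) := by
  have hq_odd : Odd q := by
    refine Nat.odd_iff.mpr ?_; omega
  obtain ⟨s, m, hm_odd, ha_eq⟩ := Nat.exists_eq_two_pow_mul_odd ha
  have hmdvd : m ∣ a := ⟨2 ^ s, by rw [ha_eq]; ring⟩
  -- J(m | q) = 1
  have hJm : jacobiSym (m : ℤ) q = 1 := by
    have h1 : jacobiSym (m : ℤ) q = jacobiSym (q : ℤ) m :=
      jacobiSym.quadratic_reciprocity_one_mod_four' hm_odd hq4
    have hmod : ((q : ℤ) * (b : ℤ) ^ 2) % m = (1 : ℤ) % m := by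
      have : (m : ℤ) ∣ (q : ℤ) * (b : ℤ) ^ 2 - 1 := by
        obtain ⟨c, hc⟩ := hmdvd
        refine ⟨(p : ℤ) * c ^ 2 * m, ?_⟩
        have : (q * b ^ 2 : ℤ) = (p : ℤ) * (a : ℤ) ^ 2 + 1 := by exact_mod_cast heq
        rw [this]; rw [show (a : ℤ) = m * c by exact_mod_cast hc]; ring
      have h4 : (m : ℤ) ∣ (1 : ℤ) - (q : ℤ) * (b : ℤ) ^ 2 := by
        simpa using (dvd_neg.mpr this)
      exact (Int.modEq_iff_dvd.mpr h4 : _)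
    have h2 : jacobiSym ((q : ℤ) * (b : ℤ) ^ 2) m = 1 := by
      rw [jacobiSym.mod_left' hmod, jacobiSym.one_left]
    rw [jacobiSym.mul_left] at h2
    have hbm : Int.gcd (b : ℤ) m = 1 := by
      have : Nat.Coprime b m := (hab.symm.coprime_dvd_right hmdvd)
      simpa [Int.gcd_natCast_natCast] using this
    have h3 : jacobiSym ((b : ℤ) ^ 2) m = 1 := by
      rw [show ((b:ℤ)^2) = (b:ℤ)^2 by rfl, jacobiSym.pow_left, jacobiSym.sq_one hbm]
    rw [h3, mul_one] at h2
    rw [h1, h2]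
  have hsplit : legendreSym q a = jacobiSym (2 : ℤ) q ^ s * jacobiSym (m : ℤ) q := by
    rw [jacobiSym.legendreSym.to_jacobiSym]
    rw [show ((a : ℤ)) = (2 : ℤ) ^ s * m by exact_mod_cast ha_eq]
    rw [jacobiSym.mul_left, jacobiSym.pow_left]
  have hq8 : q % 8 = 1 ∨ q % 8 = 5 := by omega
  have h2q : jacobiSym (2 : ℤ) q = ZMod.χ₈ (q : ZMod 8) := jacobiSym.at_two hq_odd
  rcases hq8 with hq8 | hq8
  · have hχ : ZMod.χ₈ (q : ZMod 8) = 1 := by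
      rw [ZMod.χ₈_nat_mod_eight, hq8]; decide
    have hev : (q - 1) / 4 % 2 = 0 := by omega
    rw [hsplit, hJm, h2q, hχ, one_pow, mul_one]
    rw [show (q-1)/4 = 2 * ((q-1)/8) by omega]
    rw [pow_mul]; norm_num
  · have hχ : ZMod.χ₈ (q : ZMod 8) = -1 := by
      rw [ZMod.χ₈_nat_mod_eight, hq8]; decide
    -- show s = 1
    have hb_odd : b % 2 = 1 := by
      by_contra hbe
      have hbe : b % 2 = 0 := by omega
      obtain ⟨c, hc⟩ : ∃ c, b = 2 * c := ⟨b / 2, by omega⟩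
      have hao : a % 2 = 1 := by
        by_contra hae
        have h2 : (2 : ℕ) ∣ Nat.gcd a b := Nat.dvd_gcd (by omega) (by omega)
        rw [hab] at h2; omega
      have e1 : a ^ 2 % 8 = 1 := odd_sq_mod8 hao
      have e2 : p * a ^ 2 % 4 = 1 := by
        rw [Nat.mul_mod, hp4]; omega
      have e3 : q * b ^ 2 = 4 * (q * c ^ 2) := by rw [hc]; ring
      generalize q * c ^ 2 = X at e3
      generalize p * a ^ 2 = Y at heq e2
      omega
    have hb8 : q * b ^ 2 % 8 = 5 := by
      rw [Nat.mul_mod, odd_sq_mod8 hb_odd, hq8]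
    have hpa8 : p * a ^ 2 % 8 = 4 := by
      generalize p * a ^ 2 = Y at heq hb8 ⊢
      omega
    have hae : a % 2 = 0 := by
      by_contra hao
      have e1 := odd_sq_mod8 (show a % 2 = 1 by omega)
      have : p * a ^ 2 % 8 = p % 8 := by rw [Nat.mul_mod, e1]; omega
      omega
    obtain ⟨a₀, ha0⟩ : ∃ c, a = 2 * c := ⟨a / 2, by omega⟩
    have ha04 : p * a ^ 2 = 4 * (p * a₀ ^ 2) := by rw [ha0]; ring
    have hpa0_odd : p * a₀ ^ 2 % 2 = 1 := by
      generalize h : p * a₀ ^ 2 = Z at ha04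
      generalize p * a ^ 2 = Y at ha04 hpa8
      omega
    have ha0_odd : a₀ % 2 = 1 := by
      by_contra h
      obtain ⟨w, hw⟩ : ∃ w, a₀ = 2 * w := ⟨a₀ / 2, by omega⟩
      have : p * a₀ ^ 2 = 2 * (2 * (p * w ^ 2)) := by rw [hw]; ring
      omega
    have hm2 : m % 2 = 1 := Nat.odd_iff.mp hm_odd
    have hs1 : s = 1 := by
      rcases s with _ | _ | s
      · rw [pow_zero, one_mul] at ha_eq; omega
      · rfl
      · exfalso
        have h4 : a = 4 * (2 ^ s * m) := by rw [ha_eq]; ring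
        generalize 2 ^ s * m = K at h4
        omega
    have hodd : (q - 1) / 4 % 2 = 1 := by omega
    rw [hsplit, hJm, h2q, hχ, hs1, mul_one, pow_one]
    rw [show (q-1)/4 = 2 * ((q-1)/8) + 1 by omega]
    rw [pow_succ, pow_mul]; norm_num

lemma case_iii (p q a b : ℕ) [Fact p.Prime] [Fact q.Prime]
    (hp4 : p % 4 = 1) (hq4 : q % 4 = 1)
    (hab : Nat.Coprime a b) (ha : a ≠ 0) (heq : q * b ^ 2 = p * a ^ 2 + 1)
    (hcond : legendreSym q p = -1 ∨
      (legendreSym q p = 1 ∧ ¬ ∃ z : ZMod q, z ^ 4 = (p : ZMod q))) : False := by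
  have hq2 : 2 ≤ q := (Fact.out : q.Prime).two_le
  set A : ZMod q := ((a : ℕ) : ZMod q) with hA
  have hkey : (p : ZMod q) * A ^ 2 = -1 := by
    have := congrArg (Nat.cast : ℕ → ZMod q) heq
    push_cast at this
    rw [ZMod.natCast_self] at this
    simp at this
    linear_combination -this
  have hA0 : A ≠ 0 := by
    intro h0
    rw [h0] at hkey
    simp at hkey
  have hp0 : (p : ZMod q) ≠ 0 := by
    intro h0
    rw [h0, zero_mul] at hkey
    exact (neg_ne_zero.mpr one_ne_zero) hkey.symm
  have hA20 : A ^ 2 ≠ 0 := pow_ne_zero _ hA0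
  have hp_eq : (p : ZMod q) = -1 * (A ^ 2)⁻¹ := by
    rw [← hkey, mul_assoc, mul_inv_cancel₀ hA20, mul_one]
  -- p is a square mod q
  obtain ⟨j, hj⟩ : IsSquare (-1 : ZMod q) := ZMod.exists_sq_eq_neg_one_iff.mpr (by omega)
  have hsq : IsSquare ((p : ℤ) : ZMod q) := by
    refine ⟨j * A⁻¹, ?_⟩
    push_cast
    rw [hp_eq, hj, sq, mul_inv]
    ring
  have hleg1 : legendreSym q p = 1 :=
    (legendreSym.eq_one_iff q (by push_cast; exact hp0)).mpr hsq
  rcases hcond with hcond | ⟨_, hnot4⟩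
  · rw [hleg1] at hcond; norm_num at hcond
  · apply hnot4
    set n : ℕ := (q - 1) / 4 with hn
    have hq4n : q % 4 = 1 := hq4
    have hA2n : A ^ (2 * n) = ((-1 : ZMod q)) ^ n := by
      have h1 := legendreSym.eq_pow q ((a : ℕ) : ℤ)
      have h2 := legendre_val p q a b hp4 hq4 hab ha heq
      rw [h2] at h1
      have h3 : q / 2 = 2 * n := by omega
      rw [h3] at h1
      push_cast at h1
      rw [← h1]
    have hpow : (p : ZMod q) ^ n = 1 := by
      have hm1 : ((-1 : ZMod q)) ^ n ≠ 0 := pow_ne_zero _ (neg_ne_zero.mpr one_ne_zero)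
      rw [hp_eq, mul_pow, inv_pow, ← pow_mul, hA2n]
      rw [show ((-1 : ZMod q)) ^ n * (((-1 : ZMod q)) ^ n)⁻¹ = 1 from mul_inv_cancel₀ hm1]
    exact quartic_of_pow_eq_one q hq4 hp0 hpow

set_option maxHeartbeats 1000000 in
theorem neg_one_repr_x_sq_add_q_y_sq (p q : ℕ) [Fact p.Prime] [Fact q.Prime]
    (hp4 : p % 4 = 1) (hq4 : q % 4 = 1) (hpq : p ≠ q)
    (hcond : legendreSym q p = -1 ∨
      (legendreSym q p = 1 ∧ ¬ ∃ z : ZMod q, z ^ 4 = (p : ZMod q)))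
    (F : Type*) [Field F] [NumberField F]
    (s : F) (hs : s ^ 2 = -(p : F))
    (hgen : IntermediateField.adjoin ℚ {s} = ⊤) :
    ∃ x y : 𝓞 F, x ^ 2 + (q : 𝓞 F) * y ^ 2 = -1 := by
  have hp := (Fact.out : p.Prime)
  have hq := (Fact.out : q.Prime)
  have hp5 : 5 ≤ p := by have := hp.two_le; omega
  have hq5 : 5 ≤ q := by have := hq.two_le; omega
  -- the element √(-p) as an algebraic integer
  have hsint : IsIntegral ℤ s := by
    refine ⟨Polynomial.X ^ 2 + Polynomial.C (p : ℤ), Polynomial.monic_X_pow_add_C _ two_ne_zero, ?_⟩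
    simp [Polynomial.eval₂_add, Polynomial.eval₂_pow, hs]
  set S : 𝓞 F := ⟨s, hsint⟩ with hS
  have hSc : (algebraMap (𝓞 F) F) S = s := rfl
  -- helper for the two solution shapes
  have sol1 : ∀ a b : ℕ, p * q * b ^ 2 = a ^ 2 + 1 → ∃ x y : 𝓞 F, x ^ 2 + (q : 𝓞 F) * y ^ 2 = -1 := by
    intro a b hnat
    refine ⟨(a : 𝓞 F), (b : 𝓞 F) * S, ?_⟩
    apply RingOfIntegers.coe_injective
    have hF : (p : F) * (q : F) * (b : F) ^ 2 = (a : F) ^ 2 + 1 := by exact_mod_cast hnat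
    push_cast [map_add, map_mul, map_pow, map_neg, map_one, hSc]
    linear_combination (q : F) * (b : F) ^ 2 * hs - hF
  have sol2 : ∀ a b : ℕ, p * b ^ 2 = q * a ^ 2 + 1 → ∃ x y : 𝓞 F, x ^ 2 + (q : 𝓞 F) * y ^ 2 = -1 := by
    intro a b hnat
    refine ⟨(b : 𝓞 F) * S, (a : 𝓞 F), ?_⟩
    apply RingOfIntegers.coe_injective
    have hF : (p : F) * (b : F) ^ 2 = (q : F) * (a : F) ^ 2 + 1 := by exact_mod_cast hnat
    push_cast [map_add, map_mul, map_pow, map_neg, map_one, hSc]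
    linear_combination (b : F) ^ 2 * hs - hF
  -- Pell setup
  set d : ℤ := (p : ℤ) * (q : ℤ) with hd
  have hd0 : 0 < d := by positivity
  have hdns : ¬ IsSquare d := by
    rintro ⟨r, hr⟩
    have hnat : p * q = r.natAbs * r.natAbs := by
      have : d.natAbs = (r * r).natAbs := by rw [hr]
      rw [Int.natAbs_mul] at this
      simpa [hd, Int.natAbs_mul] using this
    have hpdvd : p ∣ r.natAbs := by
      have : p ∣ r.natAbs * r.natAbs := ⟨q, by omega⟩
      exact (Nat.Prime.dvd_mul hp).mp this |>.elim id id
    obtain ⟨k, hk⟩ := hpdvd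
    have hq' : q = p * k ^ 2 := by
      have h2 : p * q = p * (p * k ^ 2) := by rw [hnat, hk]; ring
      exact Nat.eq_of_mul_eq_mul_left hp.pos h2
    have : p ∣ q := ⟨k ^ 2, hq'⟩
    exact hpq ((Nat.prime_dvd_prime_iff_eq hp hq).mp this)
  obtain ⟨sol, hfund⟩ := Pell.IsFundamental.exists_of_not_isSquare hd0 hdns
  have ht1 : 1 < sol.x := hfund.1
  have hu0 : 0 < sol.y := hfund.2.1
  have hprop := sol.prop
  set T : ℕ := sol.x.toNat with hT
  set U : ℕ := sol.y.toNat with hU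
  have hTz : (T : ℤ) = sol.x := Int.toNat_of_nonneg (by omega)
  have hUz : (U : ℤ) = sol.y := Int.toNat_of_nonneg (by omega)
  have hT1 : 1 < T := by omega
  have hU1 : 1 ≤ U := by omega
  have hTeq : T ^ 2 = p * q * U ^ 2 + 1 := by
    have hprop' : sol.x ^ 2 - (p : ℤ) * q * sol.y ^ 2 = 1 := by rw [← hd]; exact hprop
    have : (T : ℤ) ^ 2 = (p : ℤ) * q * (U : ℤ) ^ 2 + 1 := by
      rw [hTz, hUz]; linarith [hprop']
    exact_mod_cast this
  -- parity of T and U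
  have hpq4 : (p * q) % 4 = 1 := by rw [Nat.mul_mod, hp4, hq4]
  have hpq8 : (p * q) % 8 = 1 ∨ (p * q) % 8 = 5 := by
    have h1 : p % 8 = 1 ∨ p % 8 = 5 := by omega
    have h2 : q % 8 = 1 ∨ q % 8 = 5 := by omega
    rcases h1 with h1 | h1 <;> rcases h2 with h2 | h2 <;>
      rw [Nat.mul_mod, h1, h2] <;> norm_num
  have hU_even : U % 2 = 0 := by
    by_contra hUo
    have hU2 : U ^ 2 % 8 = 1 := odd_sq_mod8 (by omega)
    have hX4 : (p * q * U ^ 2) % 4 = 1 := by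
      rw [Nat.mul_mod, hpq4]
      have : U ^ 2 % 4 = 1 := by omega
      rw [this]
    -- T^2 ≡ 2 mod 4, impossible
    have hT2 : T ^ 2 % 4 = 2 := by
      generalize p * q * U ^ 2 = X at hTeq hX4
      omega
    rcases Nat.even_or_odd T with hTe | hTo
    · obtain ⟨c, hc⟩ := hTe
      have : T ^ 2 = 4 * c ^ 2 := by rw [hc]; ring
      generalize c ^ 2 = C at this
      omega
    · have := odd_sq_mod8 (Nat.odd_iff.mp hTo)
      omega
  have hT_odd : T % 2 = 1 := by
    by_contra hTe
    have hU2e : U ^ 2 % 2 = 0 := by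
      rw [Nat.pow_mod]
      have : U % 2 = 0 := hU_even
      rw [this]
    have hXe : (p * q * U ^ 2) % 2 = 0 := by
      rw [Nat.mul_mod, hU2e]; simp
    have hT2e : T ^ 2 % 2 = 0 := by
      rw [Nat.pow_mod]
      have : T % 2 = 0 := by omega
      rw [this]
    generalize p * q * U ^ 2 = X at hTeq hXe
    generalize T ^ 2 = Y at hT2e hTeq
    omega
  -- descent
  obtain ⟨k, hk⟩ : ∃ k, T = 2 * k + 1 := ⟨T / 2, by omega⟩
  obtain ⟨V, hV⟩ : ∃ V, U = 2 * V := ⟨U / 2, by omega⟩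
  have hk1 : 1 ≤ k := by omega
  have hV1 : 1 ≤ V := by omega
  have hkeq : k * (k + 1) = p * q * V ^ 2 := by
    have e1 : (2 * k + 1) ^ 2 = 4 * (k * (k + 1)) + 1 := by ring
    have e2 : p * q * (2 * V) ^ 2 = 4 * (p * q * V ^ 2) := by ring
    rw [hk, hV, e1, e2] at hTeq
    omega
  have hcop : Nat.Coprime k (k + 1) := by simp
  rcases factorization4 hp hq hpq hcop hkeq with ⟨a, b, ha, hb⟩ | ⟨a, b, ha, hb⟩ |
    ⟨a, b, ha, hb⟩ | ⟨a, b, ha, hb⟩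
  · -- k = a², k+1 = pq b² : negative Pell, gives a solution
    exact sol1 a b (by omega)
  · -- k = pq a², k+1 = b² : contradicts minimality
    exfalso
    have ha1 : 1 ≤ a := by
      rcases Nat.eq_zero_or_pos a with h0 | h
      · rw [h0] at ha; simp at ha; omega
      · exact h
    have hb2 : b ^ 2 = p * q * a ^ 2 + 1 := by omega
    have hbge : 2 ≤ b := by
      rcases Nat.lt_or_ge b 2 with h2 | h2
      · interval_cases b <;> nlinarith [hb2, ha1, hp5, hq5]
      · exact h2
    have hsol2prop : (b : ℤ) ^ 2 - d * (a : ℤ) ^ 2 = 1 := by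
      have : (b : ℤ) ^ 2 = (p : ℤ) * q * (a : ℤ) ^ 2 + 1 := by exact_mod_cast hb2
      rw [hd]; linarith
    set sol2' : Pell.Solution₁ d := Pell.Solution₁.mk (b : ℤ) (a : ℤ) hsol2prop with hsol2'
    have hxlt : sol.x ≤ sol2'.x := hfund.2.2 (by
      rw [hsol2', Pell.Solution₁.x_mk]; exact_mod_cast hbge)
    rw [hsol2', Pell.Solution₁.x_mk, ← hTz] at hxlt
    have hble : b ≤ b ^ 2 := Nat.le_self_pow (by norm_num) b
    have : T ≤ b := by exact_mod_cast hxlt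
    omega
  · -- k = p a², k+1 = q b² : impossible by the character condition
    exfalso
    have ha0 : a ≠ 0 := by
      intro h0; rw [h0] at ha; simp at ha; omega
    have hab : Nat.Coprime a b := by
      have h1 : a ∣ k := ⟨p * a, by rw [ha]; ring⟩
      have h2 : b ∣ k + 1 := ⟨q * b, by rw [hb]; ring⟩
      exact Nat.Coprime.coprime_dvd_right h2 (Nat.Coprime.coprime_dvd_left h1 hcop)
    exact case_iii p q a b hp4 hq4 hab ha0 (by omega) hcond
  · -- k = q a², k+1 = p b² : gives a solution
    exact sol2 a b (by omega)
end

section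
/- Let n be a positive integer. The equation 2x^2 + 7y^2 = n has a solution in the 2-adic integers Z_2 if and only if n·2^{-v_2(n)} ≡ ±1 (mod 8). -/
open Polynomial

lemma lemB (b k : ℤ) (hb : b % 2 = 1) (h : (8:ℤ) ∣ (b - k)) :
    ∃ y : ℤ_[2], (b : ℤ_[2]) * y ^ 2 = (k : ℤ_[2]) := by
  set F : Polynomial ℤ_[2] := C (b : ℤ_[2]) * X ^ 2 - C (k : ℤ_[2]) with hF
  have heval : F.eval 1 = ((b - k : ℤ) : ℤ_[2]) := by simp [hF]
  have hderiv : F.derivative.eval 1 = ((2 * b : ℤ) : ℤ_[2]) := by simp [hF]; ring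
  have hnb : ‖((b:ℤ) : ℤ_[2])‖ = 1 := by
    have h1 : ¬ ‖((b:ℤ) : ℤ_[2])‖ < 1 := by
      rw [PadicInt.norm_int_lt_one_iff_dvd]; omega
    have h2 := PadicInt.norm_le_one ((b:ℤ) : ℤ_[2])
    linarith
  have h2c : ((2:ℕ) : ℤ_[2]) = 2 := by norm_cast
  have hn2 : ‖(2 : ℤ_[2])‖ = 2⁻¹ := by
    have := @PadicInt.norm_p 2 _
    rw [h2c] at this
    rw [this]; norm_num
  have hnd : ‖F.derivative.eval 1‖ = 2⁻¹ := by
    rw [hderiv]; push_cast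
    rw [norm_mul, hnb, hn2, mul_one]
  have hne : ‖F.eval 1‖ ≤ 8⁻¹ := by
    rw [heval]
    have := (@PadicInt.norm_int_le_pow_iff_dvd 2 _ (b - k) 3).2 (by norm_num [h])
    norm_num at this ⊢
    linarith
  have hlt : ‖F.eval 1‖ < ‖F.derivative.eval 1‖ ^ 2 := by
    rw [hnd]; norm_num; linarith
  obtain ⟨z, hz, -⟩ := hensels_lemma hlt
  refine ⟨z, ?_⟩
  have hz2 : (b:ℤ_[2]) * z ^ 2 - (k:ℤ_[2]) = 0 := by simpa [hF] using hz
  linear_combination hz2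

lemma two_dvd_of_sq {y : ℤ_[2]} (h : (2:ℤ_[2]) ∣ 7 * y ^ 2) : ∃ y₁, y = 2 * y₁ := by
  have hp : Prime ((2:ℕ) : ℤ_[2]) := PadicInt.prime_p
  have hp2 : Prime (2 : ℤ_[2]) := by exact_mod_cast hp
  have h7 : ¬ (2:ℤ_[2]) ∣ 7 := by
    intro hd
    have : ‖((7:ℤ) : ℤ_[2])‖ < 1 := by
      rw [PadicInt.norm_lt_one_iff_dvd]
      exact_mod_cast hd
    rw [PadicInt.norm_int_lt_one_iff_dvd] at this
    omega
  have hy2 : (2:ℤ_[2]) ∣ y ^ 2 := by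
    rcases (hp2.dvd_mul.mp h) with h' | h'
    · exact absurd h' h7
    · exact h'
  have := hp2.dvd_of_dvd_pow hy2
  exact ⟨this.choose, this.choose_spec⟩

lemma lemA : ∀ v : ℕ, ∀ (x y : ℤ_[2]) (m : ℕ), (m % 8 = 3 ∨ m % 8 = 5) →
    2 * x ^ 2 + 7 * y ^ 2 ≠ 2 ^ v * (m : ℤ_[2]) := by
  intro v
  induction v using Nat.strong_induction_on with
  | _ v ih =>
  intro x y m hm heq
  set f : ℤ_[2] →+* ZMod 8 :=
    (ZMod.castHom (by norm_num : (8:ℕ) ∣ 2 ^ 3) (ZMod 8)).comp (PadicInt.toZModPow 3) with hf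
  have hmod : ((m : ZMod 8) = 3 ∨ (m : ZMod 8) = 5) := by
    rcases hm with h | h
    · left; rw [← ZMod.natCast_mod m 8, h]; rfl
    · right; rw [← ZMod.natCast_mod m 8, h]; rfl
  have hdec : ∀ X Y M : ZMod 8, (M = 3 ∨ M = 5) →
      2 * X ^ 2 + 7 * Y ^ 2 ≠ M ∧ X ^ 2 + 14 * Y ^ 2 ≠ M := by decide
  match v with
  | 0 =>
    have := congrArg f heq
    simp only [map_add, map_mul, map_pow, map_ofNat, pow_zero, one_mul, map_natCast] at this
    exact (hdec (f x) (f y) m hmod).1 this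
  | 1 =>
    have hdvd : (2:ℤ_[2]) ∣ 7 * y ^ 2 := by
      refine ⟨2 ^ 0 * m - x ^ 2, ?_⟩
      have : (7:ℤ_[2]) * y ^ 2 = 2 ^ 1 * m - 2 * x ^ 2 := by linear_combination heq
      rw [this]; ring
    obtain ⟨y₁, rfl⟩ := two_dvd_of_sq hdvd
    have heq2 : x ^ 2 + 14 * y₁ ^ 2 = (m : ℤ_[2]) := by
      have h2 : (2:ℤ_[2]) * (x ^ 2 + 14 * y₁ ^ 2) = 2 * (m : ℤ_[2]) := by
        linear_combination heq
      exact mul_left_cancel₀ two_ne_zero h2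
    have := congrArg f heq2
    simp only [map_add, map_mul, map_pow, map_ofNat, map_natCast] at this
    exact (hdec (f x) (f y₁) m hmod).2 this
  | (v+2) =>
    have hdvd : (2:ℤ_[2]) ∣ 7 * y ^ 2 := by
      refine ⟨2 ^ (v+1) * m - x ^ 2, ?_⟩
      have : (7:ℤ_[2]) * y ^ 2 = 2 ^ (v+2) * m - 2 * x ^ 2 := by linear_combination heq
      rw [this]; ring
    obtain ⟨y₁, rfl⟩ := two_dvd_of_sq hdvd
    have heq2 : x ^ 2 + 14 * y₁ ^ 2 = 2 ^ (v+1) * (m : ℤ_[2]) := by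
      have h2 : (2:ℤ_[2]) * (x ^ 2 + 14 * y₁ ^ 2) = 2 * (2 ^ (v+1) * (m:ℤ_[2])) := by
        linear_combination heq
      exact mul_left_cancel₀ two_ne_zero h2
    have hdvd2 : (2:ℤ_[2]) ∣ 7 * x ^ 2 := by
      refine ⟨7 * (2 ^ v * m - 7 * y₁ ^ 2), ?_⟩
      have : (x:ℤ_[2]) ^ 2 = 2 ^ (v+1) * m - 14 * y₁ ^ 2 := by linear_combination heq2
      rw [mul_comm (7:ℤ_[2]) (x^2), this]; ring
    obtain ⟨x₁, rfl⟩ := two_dvd_of_sq hdvd2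
    have heq3 : 2 * x₁ ^ 2 + 7 * y₁ ^ 2 = 2 ^ v * (m : ℤ_[2]) := by
      have h2 : (2:ℤ_[2]) * (2 * x₁ ^ 2 + 7 * y₁ ^ 2) = 2 * (2 ^ v * (m:ℤ_[2])) := by
        linear_combination heq2
      exact mul_left_cancel₀ two_ne_zero h2
    exact ih v (by omega) x₁ y₁ m hm heq3

theorem local_solvability_at_two (n : ℕ) (hn : 0 < n) :
    (∃ x y : ℤ_[2], 2 * x ^ 2 + 7 * y ^ 2 = (n : ℤ_[2])) ↔
      (n / 2 ^ (padicValNat 2 n)) % 8 = 1 ∨ (n / 2 ^ (padicValNat 2 n)) % 8 = 7 := by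
  set v := padicValNat 2 n with hv
  set m := n / 2 ^ v with hm
  have hfac : n = 2 ^ v * m := (Nat.ordProj_mul_ordCompl_eq_self n 2).symm
  have hmodd : ¬ 2 ∣ m := Nat.not_dvd_ordCompl (by norm_num) hn.ne'
  have hm2 : m % 2 = 1 := by omega
  have hcast : (n : ℤ_[2]) = 2 ^ v * (m : ℤ_[2]) := by
    rw [hfac]; push_cast; ring
  constructor
  · rintro ⟨x, y, hxy⟩
    by_contra hcon
    push_neg at hcon
    have h8 : m % 8 = 3 ∨ m % 8 = 5 := by
      have := Nat.mod_mod_of_dvd m (by norm_num : (2:ℕ) ∣ 8)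
      omega
    exact lemA v x y m h8 (hxy.trans hcast)
  · intro h8
    rcases Nat.even_or_odd v with ⟨w, hw⟩ | ⟨w, hw⟩
    · -- v = w + w
      rcases h8 with h1 | h7
      · -- m % 8 = 1, split m % 16
        have h16 : m % 16 = 1 ∨ m % 16 = 9 := by
          have := Nat.mod_mod_of_dvd m (by norm_num : (8:ℕ) ∣ 16)
          omega
        rcases h16 with h16 | h16
        · set t : ℕ := m / 16 with ht
          have hmt : m = 16 * t + 1 := by omega
          obtain ⟨r, hr⟩ := lemB 1 (8 * t - 31) (by norm_num) ⟨4 - t, by ring⟩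
          refine ⟨2 ^ w * r, 3 * 2 ^ w, ?_⟩
          rw [hcast, hw]
          have hmc : ((16 * t + 1 : ℕ) : ℤ_[2]) = (m : ℤ_[2]) := by rw [← hmt]
          push_cast at hmc hr ⊢
          rw [one_mul] at hr
          linear_combination (2:ℤ_[2]) * (2:ℤ_[2])^w * (2:ℤ_[2])^w * hr + (2:ℤ_[2])^w * (2:ℤ_[2])^w * hmc + ((2:ℤ_[2])^w * (2:ℤ_[2])^w - 2^(w+w)) * (m : ℤ_[2])
        · set t : ℕ := m / 16 with ht
          have hmt : m = 16 * t + 9 := by omega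
          obtain ⟨r, hr⟩ := lemB 1 (8 * t + 1) (by norm_num) ⟨-t, by ring⟩
          refine ⟨2 ^ w * r, 2 ^ w, ?_⟩
          rw [hcast, hw]
          have hmc : ((16 * t + 9 : ℕ) : ℤ_[2]) = (m : ℤ_[2]) := by rw [← hmt]
          push_cast at hmc hr ⊢
          rw [one_mul] at hr
          linear_combination (2:ℤ_[2]) * (2:ℤ_[2])^w * (2:ℤ_[2])^w * hr + (2:ℤ_[2])^w * (2:ℤ_[2])^w * hmc + ((2:ℤ_[2])^w * (2:ℤ_[2])^w - 2^(w+w)) * (m : ℤ_[2])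
      · -- m % 8 = 7, v even
        obtain ⟨r, hr⟩ := lemB 7 (m : ℤ) (by norm_num) (by omega)
        refine ⟨0, 2 ^ w * r, ?_⟩
        rw [hcast, hw]
        push_cast at hr ⊢
        linear_combination (2:ℤ_[2])^w * (2:ℤ_[2])^w * hr + ((2:ℤ_[2])^w * (2:ℤ_[2])^w - 2^(w+w)) * (m : ℤ_[2])
    · -- v = 2w + 1
      rcases h8 with h1 | h7
      · obtain ⟨r, hr⟩ := lemB 1 (m : ℤ) (by norm_num) (by omega)
        refine ⟨2 ^ w * r, 0, ?_⟩
        rw [hcast, hw]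
        push_cast at hr ⊢
        rw [one_mul] at hr
        linear_combination (2:ℤ_[2]) * (2:ℤ_[2])^w * (2:ℤ_[2])^w * hr + (2 * (2:ℤ_[2])^w * (2:ℤ_[2])^w - 2^(2*w+1)) * (m : ℤ_[2])
      · obtain ⟨r, hr⟩ := lemB 1 ((m : ℤ) - 14) (by norm_num) (by omega)
        refine ⟨2 ^ w * r, 2 * 2 ^ w, ?_⟩
        rw [hcast, hw]
        push_cast at hr ⊢
        rw [one_mul] at hr
        linear_combination (2:ℤ_[2]) * (2:ℤ_[2])^w * (2:ℤ_[2])^w * hr + (2 * (2:ℤ_[2])^w * (2:ℤ_[2])^w - 2^(2*w+1)) * (m : ℤ_[2])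
end

section
/- Let n be a positive integer. The equation 2x^2 + 7y^2 = n has a solution in the 7-adic integers Z_7 if and only if the odd part condition holds: the Legendre symbol (n·7^{-v_7(n)} / 7) = 1. -/
instance : Fact (Nat.Prime 7) := ⟨by norm_num⟩

/-!
Since `2 ≡ 3²` mod 7, Hensel's lemma makes `2` a unit square in `ℤ_[7]`, so `2x² + 7y²` is
equivalent to `x² + 7y²`. This form represents `7c` iff it represents `c` (then `7 ∣ x`), which
strips off the factor `7 ^ v₇(n)`. A unit `u` is represented iff it is a square modulo 7: reduce
mod 7 for one direction, lift a square root by Hensel's lemma (with `y = 0`) for the other.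
-/

open Polynomial

namespace PadicInt

variable {p : ℕ} [Fact p.Prime]

theorem toZMod_eq_zero_iff_norm_lt_one (x : ℤ_[p]) : toZMod x = 0 ↔ ‖x‖ < 1 := by
  rw [← RingHom.mem_ker, ker_toZMod, IsLocalRing.mem_maximalIdeal, mem_nonunits]

theorem isUnit_iff_toZMod_ne_zero (x : ℤ_[p]) : IsUnit x ↔ toZMod x ≠ 0 := by
  rw [Ne, toZMod_eq_zero_iff_norm_lt_one, not_lt, isUnit_iff]
  exact ⟨fun h => h.ge, fun h => le_antisymm (norm_le_one x) h⟩

theorem isSquare_of_isSquare_toZMod (hp : p ≠ 2) {c : ℤ_[p]} (hc : toZMod c ≠ 0)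
    (hsq : IsSquare (toZMod c)) : IsSquare c := by
  obtain ⟨r, hr⟩ := hsq
  set a : ℤ_[p] := (r.val : ℤ_[p])
  have ha : toZMod a = r := by simp [a]
  have hr0 : r ≠ 0 := by rintro rfl; exact hc (by simpa using hr)
  have h2 : (2 : ZMod p) ≠ 0 := Ring.two_ne_zero (by rwa [ZMod.ringChar_zmod_n])
  set F : ℤ_[p][X] := X ^ 2 - C c
  have hFa : ‖F.aeval a‖ < 1 := by
    rw [← toZMod_eq_zero_iff_norm_lt_one]
    simp [F, ha, hr, sq]
  have hF'a : ‖F.derivative.aeval a‖ = 1 := by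
    have hF' : F.derivative.aeval a = 2 * a := by simp [F, one_add_one_eq_two]
    rw [← isUnit_iff, isUnit_iff_toZMod_ne_zero, hF', map_mul, map_ofNat, ha]
    exact mul_ne_zero h2 hr0
  obtain ⟨z, hz, -⟩ := hensels_lemma (F := F) (a := a) (by rwa [hF'a, one_pow])
  exact ⟨z, by simpa [F, sub_eq_zero, sq, eq_comm] using hz⟩

theorem exists_sq_add_mul_sq_eq_iff (hp : p ≠ 2) {c : ℤ_[p]} (hc : toZMod c ≠ 0) :
    (∃ x y : ℤ_[p], x ^ 2 + p * y ^ 2 = c) ↔ IsSquare (toZMod c) := by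
  constructor
  · rintro ⟨x, y, rfl⟩
    exact ⟨toZMod x, by simp [sq]⟩
  · intro hsq
    obtain ⟨z, rfl⟩ := isSquare_of_isSquare_toZMod hp hc hsq
    exact ⟨z, 0, by ring⟩

end PadicInt

section BinaryForm

variable {R : Type*} [CommRing R]

theorem exists_mul_sq_add_mul_sq_eq_iff_of_isUnit {a : R} (ha : IsUnit a) (hsq : IsSquare a)
    (d c : R) :
    (∃ x y : R, a * x ^ 2 + d * y ^ 2 = c) ↔ ∃ x y : R, x ^ 2 + d * y ^ 2 = c := by
  obtain ⟨s, rfl⟩ := hsq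
  have hs : IsUnit s := isUnit_mul_self_iff.mp ha
  constructor
  · rintro ⟨x, y, h⟩
    exact ⟨s * x, y, by rw [← h]; ring⟩
  · rintro ⟨x, y, h⟩
    refine ⟨↑hs.unit⁻¹ * x, y, ?_⟩
    linear_combination h + (s * ↑hs.unit⁻¹ + 1) * x ^ 2 * hs.mul_val_inv

variable [IsDomain R] {π : R}

-- A solution of `x² + π y² = π c` has `π ∣ x`, and `(x, y) ↦ (π y, x)` inverts the descent.
theorem exists_sq_add_mul_sq_eq_mul_iff (hπ : Prime π) (c : R) :
    (∃ x y : R, x ^ 2 + π * y ^ 2 = π * c) ↔ ∃ x y : R, x ^ 2 + π * y ^ 2 = c := by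
  constructor
  · rintro ⟨x, y, h⟩
    have hx : π ∣ x := hπ.dvd_of_dvd_pow (n := 2) ⟨c - y ^ 2, by linear_combination h⟩
    obtain ⟨t, rfl⟩ := hx
    exact ⟨y, t, mul_left_cancel₀ hπ.ne_zero (by linear_combination h)⟩
  · rintro ⟨x, y, h⟩
    exact ⟨π * y, x, by linear_combination π * h⟩

theorem exists_sq_add_mul_sq_eq_pow_mul_iff (hπ : Prime π) (k : ℕ) (c : R) :
    (∃ x y : R, x ^ 2 + π * y ^ 2 = π ^ k * c) ↔ ∃ x y : R, x ^ 2 + π * y ^ 2 = c := by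
  induction k with
  | zero => simp
  | succ k ih => rw [pow_succ', mul_assoc, exists_sq_add_mul_sq_eq_mul_iff hπ, ih]

end BinaryForm

theorem PadicInt.isUnit_two_seven : IsUnit (2 : ℤ_[7]) := by
  rw [isUnit_iff_toZMod_ne_zero, map_ofNat]
  decide

theorem PadicInt.isSquare_two_seven : IsSquare (2 : ℤ_[7]) :=
  isSquare_of_isSquare_toZMod (by norm_num) (by rw [map_ofNat]; decide)
    (by rw [map_ofNat]; exact ⟨3, by decide⟩)

theorem local_solvability_at_seven (n : ℕ) (hn : 0 < n) :
    (∃ x y : ℤ_[7], 2 * x ^ 2 + 7 * y ^ 2 = (n : ℤ_[7])) ↔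
      legendreSym 7 ((n / 7 ^ (padicValNat 7 n) : ℕ) : ℤ) = 1 := by
  have hu : ¬ 7 ∣ n / 7 ^ padicValNat 7 n := by
    rw [← Nat.factorization_def n Fact.out]
    exact Nat.not_dvd_ordCompl Fact.out hn.ne'
  have hnu := (Nat.mul_div_cancel' (pow_padicValNat_dvd (p := 7) (n := n))).symm
  generalize padicValNat 7 n = v at hu hnu ⊢
  generalize n / 7 ^ v = u at hu hnu ⊢
  subst hnu
  rw [legendreSym.eq_one_iff' 7 (by rwa [Ne, ZMod.natCast_eq_zero_iff])]
  calc (∃ x y : ℤ_[7], 2 * x ^ 2 + 7 * y ^ 2 = ((7 ^ v * u : ℕ) : ℤ_[7]))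
      ↔ ∃ x y : ℤ_[7], x ^ 2 + (7 : ℕ) * y ^ 2 = (7 : ℤ_[7]) ^ v * u := by
        rw [exists_mul_sq_add_mul_sq_eq_iff_of_isUnit PadicInt.isUnit_two_seven
          PadicInt.isSquare_two_seven]
        push_cast
        rfl
    _ ↔ ∃ x y : ℤ_[7], x ^ 2 + (7 : ℕ) * y ^ 2 = u :=
        exists_sq_add_mul_sq_eq_pow_mul_iff PadicInt.prime_p _ _
    _ ↔ IsSquare (u : ZMod 7) := by
        rw [PadicInt.exists_sq_add_mul_sq_eq_iff (by norm_num)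
          (by rwa [map_natCast, Ne, ZMod.natCast_eq_zero_iff]), map_natCast]
end

section
/- In E = Q(√(-14)), the prime ideal P_2 above 2 satisfies: P_2^2 is principal but P_2 is not principal; hence the class of P_2 has order 2 in the class group of E. -/
open NumberField Polynomial Module


lemma no_rat_sq (n : ℕ) (hn : ∀ z : ℤ, z ^ 2 ≠ (n : ℤ)) (q : ℚ) : q ^ 2 ≠ (n : ℚ) := by
  intro hq
  have hint : IsIntegral ℤ q := by
    refine ⟨X ^ 2 - C (n : ℤ), monic_X_pow_sub_C _ two_ne_zero, ?_⟩
    simp [eval₂_sub, hq]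
  obtain ⟨z, hz⟩ := IsIntegrallyClosed.isIntegral_iff.mp hint
  apply hn z
  have : ((z : ℚ)) ^ 2 = (n : ℚ) := by rw [show ((z:ℚ)) = q from hz]; exact hq
  exact_mod_cast this

lemma minpoly_eq_quadratic {K L : Type*} [Field K] [Field L] [Algebra K L]
    {x : L} (hx : IsIntegral K x) {q : K[X]} (hq : q.Monic) (hdeg : q.natDegree = 2)
    (hroot : Polynomial.aeval x q = 0) (hxr : x ∉ (algebraMap K L).range) :
    minpoly K x = q := by
  have hdvd : minpoly K x ∣ q := minpoly.dvd K x hroot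
  have h2 : 2 ≤ (minpoly K x).natDegree := (minpoly.two_le_natDegree_iff hx).mpr hxr
  have hle : q.natDegree ≤ (minpoly K x).natDegree := hdeg ▸ h2
  exact (Polynomial.eq_of_monic_of_dvd_of_natDegree_le (minpoly.monic hx) hq hdvd hle).symm


lemma decomp_norm {E : Type*} [Field E] [NumberField E]
    (s : E) (hs : s ^ 2 = -14) (hrank : Module.finrank ℚ E = 2) (x : E) :
    ∃ a c : ℚ, x = algebraMap ℚ E a + c • s ∧
      Algebra.norm ℚ x = a ^ 2 + 14 * c ^ 2 := by
  have hsQ : ∀ r : ℚ, algebraMap ℚ E r ≠ s := by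
    intro r hr
    have : (algebraMap ℚ E) (r ^ 2) = algebraMap ℚ E (-14) := by
      rw [map_pow, hr, hs]; simp
    have h2 : r ^ 2 = -14 := (algebraMap ℚ E).injective this
    nlinarith [sq_nonneg r]
  have li : LinearIndependent ℚ ![(1 : E), s] := by
    rw [LinearIndependent.pair_iff]
    intro p r hpr
    by_cases hr : r = 0
    · subst hr
      simp only [smul_eq_mul, mul_one, zero_smul, add_zero] at hpr
      have : algebraMap ℚ E p = 0 := by rw [Algebra.algebraMap_eq_smul_one]; exact hpr
      exact ⟨by simpa using (algebraMap ℚ E).injective (by simpa using this), rfl⟩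
    · exfalso
      apply hsQ (-(p / r))
      have hss : s = (-(p/r)) • (1 : E) := by
        have h1 : r • s = -(p • (1:E)) := by rw [eq_neg_iff_add_eq_zero, add_comm]; exact hpr
        calc s = (r⁻¹ * r) • s := by rw [inv_mul_cancel₀ hr, one_smul]
          _ = r⁻¹ • (r • s) := mul_smul _ _ _
          _ = r⁻¹ • (-(p • (1:E))) := by rw [h1]
          _ = (-(p/r)) • (1:E) := by rw [smul_neg, smul_smul, ← neg_smul, div_eq_inv_mul]
      rw [Algebra.algebraMap_eq_smul_one, hss]
  have hcard : Fintype.card (Fin 2) = Module.finrank ℚ E := by simp [hrank]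
  let b : Basis (Fin 2) ℚ E := basisOfLinearIndependentOfCardEqFinrank li hcard
  have hb : ⇑b = ![(1 : E), s] := coe_basisOfLinearIndependentOfCardEqFinrank li hcard
  have hb0 : b 0 = 1 := by rw [hb]; rfl
  have hb1 : b 1 = s := by rw [hb]; rfl
  set a : ℚ := b.repr x 0 with ha
  set c : ℚ := b.repr x 1 with hc
  have hx : x = algebraMap ℚ E a + c • s := by
    have := b.sum_repr x
    rw [Fin.sum_univ_two, hb0, hb1] at this
    rw [← this, Algebra.algebraMap_eq_smul_one]
  refine ⟨a, c, hx, ?_⟩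
  -- compute repr of x * b j
  have key0 : x * b 0 = a • b 0 + c • b 1 := by
    rw [hb0, hb1, mul_one, hx, Algebra.algebraMap_eq_smul_one]
  have key1 : x * b 1 = (-14 * c) • b 0 + a • b 1 := by
    rw [hb0, hb1, hx]
    have h1 : (c • s) * s = c • s ^ 2 := by rw [smul_mul_assoc, sq]
    rw [add_mul, h1, hs, Algebra.algebraMap_eq_smul_one, smul_mul_assoc, one_mul]
    have h14 : c • (-14 : E) = (-14 * c) • (1 : E) := by
      rw [show (-14 : E) = (-14 : ℚ) • (1 : E) by simp [Algebra.smul_def], smul_smul, mul_comm]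
    rw [h14, add_comm]
  have repr_comb : ∀ (u v : ℚ), ∀ i, b.repr (u • b 0 + v • b 1) i = ![u, v] i := by
    intro u v i
    rw [map_add, map_smul, map_smul, b.repr_self, b.repr_self]
    fin_cases i <;> simp
  have hmat : Algebra.leftMulMatrix b x = !![a, -14 * c; c, a] := by
    ext i j
    rw [Algebra.leftMulMatrix_eq_repr_mul]
    fin_cases i <;> fin_cases j <;>
      simp [key0, key1, repr_comb]
  rw [Algebra.norm_eq_matrix_det b, hmat, Matrix.det_fin_two_of]
  ring


lemma int_sq_ne (n : ℤ) (h14 : n ≤ 16) (hn : ∀ z : ℤ, 0 ≤ z → z ≤ 4 → z ^ 2 ≠ n)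
    (z : ℤ) : z ^ 2 ≠ n := by
  intro h
  rcases le_or_gt 0 z with hz | hz
  · exact hn z hz (by nlinarith) h
  · exact hn (-z) (by omega) (by nlinarith) (by rw [neg_pow]; simpa using h)

lemma no_norm_two {E : Type*} [Field E] [NumberField E]
    (s : E) (hs : s ^ 2 = -14) (hrank : Module.finrank ℚ E = 2)
    (x : E) (hint : IsIntegral ℤ x)
    (hnorm : Algebra.norm ℚ x = 2 ∨ Algebra.norm ℚ x = -2) : False := by
  obtain ⟨a, c, hx, hN⟩ := decomp_norm s hs hrank x
  have hsq : a ^ 2 + 14 * c ^ 2 = 2 := by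
    rcases hnorm with h | h
    · rw [h] at hN; linarith
    · rw [h] at hN; nlinarith [sq_nonneg a, sq_nonneg c]
  have hn2 : ∀ z : ℤ, z ^ 2 ≠ (2:ℤ) := int_sq_ne 2 (by norm_num)
    (by intro z h1 h2; interval_cases z <;> omega)
  have hn7 : ∀ z : ℤ, z ^ 2 ≠ (7:ℤ) := int_sq_ne 7 (by norm_num)
    (by intro z h1 h2; interval_cases z <;> omega)
  have hn14 : ∀ z : ℤ, z ^ 2 ≠ (14:ℤ) := int_sq_ne 14 (by norm_num)
    (by intro z h1 h2; interval_cases z <;> omega)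
  by_cases hc : c = 0
  · subst hc
    apply no_rat_sq 2 hn2 a
    push_cast
    linarith [hsq]
  have hsQ : ∀ r : ℚ, algebraMap ℚ E r ≠ s := by
    intro r hr
    have : (algebraMap ℚ E) (r ^ 2) = algebraMap ℚ E (-14) := by
      rw [map_pow, hr, hs]; simp
    have h2 : r ^ 2 = -14 := (algebraMap ℚ E).injective this
    nlinarith [sq_nonneg r]
  have hxr : x ∉ (algebraMap ℚ E).range := by
    rintro ⟨r, hr⟩
    apply hsQ ((r - a) / c)
    have hcs : c • s = algebraMap ℚ E (r - a) := by
      rw [map_sub, hr, hx]; abel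
    have h3 : s = c⁻¹ • (c • s) := by rw [smul_smul, inv_mul_cancel₀ hc, one_smul]
    rw [h3, hcs, Algebra.smul_def, ← map_mul]
    congr 1
    field_simp
  set q : ℚ[X] := X ^ 2 + (C (-(2 * a)) * X + C (a ^ 2 + 14 * c ^ 2)) with hq
  have hqmonic : q.Monic := by rw [hq]; monicity!
  have hqdeg : q.natDegree = 2 := by rw [hq]; compute_degree!
  have hroot : Polynomial.aeval x q = 0 := by
    rw [hq]
    simp only [map_add, map_mul, map_pow, aeval_X, aeval_C, map_neg, map_ofNat]
    rw [hx, Algebra.smul_def]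
    linear_combination (algebraMap ℚ E c) ^ 2 * hs
  have hxQ : IsIntegral ℚ x := hint.tower_top
  have hminq : minpoly ℚ x = q := minpoly_eq_quadratic hxQ hqmonic hqdeg hroot hxr
  set α : NumberField.RingOfIntegers E := ⟨x, hint⟩ with hα
  have hmap : minpoly ℚ x = (minpoly ℤ α).map (algebraMap ℤ ℚ) :=
    minpoly.isIntegrallyClosed_eq_field_fractions ℚ E α.isIntegral
  have hcoeff : -(2 * a) = ((minpoly ℤ α).coeff 1 : ℚ) := by
    have h1 : (minpoly ℚ x).coeff 1 = -(2 * a) := by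
      rw [hminq, hq]
      simp only [coeff_add, coeff_X_pow, coeff_C_mul, coeff_X_one, coeff_C]
      norm_num
    rw [hmap] at h1
    rw [← h1, Polynomial.coeff_map]
    simp
  obtain ⟨t, h2a⟩ : ∃ t : ℤ, (t : ℚ) = -(2 * a) := ⟨(minpoly ℤ α).coeff 1, hcoeff.symm⟩
  have ht8 : (t : ℚ) ^ 2 + 56 * c ^ 2 = 8 := by
    rw [h2a]; nlinarith [hsq]
  have htb : t ^ 2 ≤ 8 := by
    have : ((t ^ 2 : ℤ) : ℚ) ≤ 8 := by push_cast; nlinarith [sq_nonneg c]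
    exact_mod_cast this
  have ht2 : -2 ≤ t ∧ t ≤ 2 := by constructor <;> nlinarith
  obtain ⟨htl, htr⟩ := ht2
  clear hcoeff hmap hminq hroot hN hx hxr hsQ hqmonic hqdeg
  interval_cases t <;> norm_num at ht8
  · apply no_rat_sq 14 hn14 (14 * c); push_cast
    linear_combination (7/2 : ℚ) * ht8
  · apply no_rat_sq 2 hn2 (4 * c); push_cast
    linear_combination (2/7 : ℚ) * ht8
  · apply no_rat_sq 7 hn7 (7 * c); push_cast
    linear_combination (7/8 : ℚ) * ht8
  · apply no_rat_sq 2 hn2 (4 * c); push_cast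
    linear_combination (2/7 : ℚ) * ht8
  · apply no_rat_sq 14 hn14 (14 * c); push_cast
    linear_combination (7/2 : ℚ) * ht8


theorem prime_above_two_order_two
    (E : Type*) [Field E] [NumberField E]
    (s : E) (hs : s ^ 2 = -14)
    (hgen : IntermediateField.adjoin ℚ {s} = ⊤)
    (P : Ideal (𝓞 E)) (hP : P.IsPrime) (hPbot : P ≠ ⊥)
    (h2 : (2 : 𝓞 E) ∈ P) :
    (P ^ 2).IsPrincipal ∧ ¬ P.IsPrincipal ∧
      ∀ h : P ∈ nonZeroDivisors (Ideal (𝓞 E)),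
        orderOf (ClassGroup.mk0 ⟨P, h⟩) = 2 := by
  have hsQ : ∀ r : ℚ, algebraMap ℚ E r ≠ s := by
    intro r hr
    have h1 : (algebraMap ℚ E) (r ^ 2) = algebraMap ℚ E (-14) := by
      rw [map_pow, hr, hs]; simp
    have h2 : r ^ 2 = -14 := (algebraMap ℚ E).injective h1
    nlinarith [sq_nonneg r]
  -- finrank = 2
  have hrank : Module.finrank ℚ E = 2 := by
    have hs_int : IsIntegral ℚ s := Algebra.IsIntegral.isIntegral s
    have hmin : minpoly ℚ s = X ^ 2 + (C (0:ℚ) * X + C 14) := by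
      apply minpoly_eq_quadratic hs_int
      · monicity!
      · compute_degree!
      · simp only [map_add, map_mul, map_pow, aeval_X, aeval_C, map_zero, map_ofNat]
        rw [hs]; ring
      · rintro ⟨r, hr⟩; exact hsQ r hr
    have h1 : Module.finrank ℚ (IntermediateField.adjoin ℚ {s}) = 2 := by
      rw [IntermediateField.adjoin.finrank hs_int, hmin]
      compute_degree!
    rw [hgen, IntermediateField.finrank_top'] at h1
    exact h1
  -- s is integral over ℤ
  have hsint : IsIntegral ℤ s := by
    refine ⟨X ^ 2 + C 14, ?_, ?_⟩
    · monicity!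
    · simp only [eval₂_add, eval₂_pow, eval₂_X, eval₂_C]
      rw [hs]; simp
  set σ : 𝓞 E := ⟨s, hsint⟩ with hσ
  have hσval : (σ : E) = s := rfl
  have hσ2 : σ * σ = -14 := by
    ext
    push_cast [hσval]
    rw [← sq, hs]
    simp [RingOfIntegers.coe_eq_algebraMap, map_ofNat]
  -- σ ∈ P
  have hσP : σ ∈ P := by
    have hm : σ * σ ∈ P := by
      rw [hσ2]
      have : (-14 : 𝓞 E) = (-7) * 2 := by norm_num
      rw [this]
      exact Ideal.mul_mem_left _ _ h2
    rcases hP.mem_or_mem hm with h | h <;> exact h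
  set J : Ideal (𝓞 E) := Ideal.span {2, σ} with hJ
  have hJP : J ≤ P := by
    rw [hJ, Ideal.span_le]
    rintro x (rfl | rfl)
    exacts [h2, hσP]
  -- J ^ 2 = span {2}
  have hJsq : J ^ 2 = Ideal.span {(2 : 𝓞 E)} := by
    apply le_antisymm
    · rw [hJ, pow_two, Ideal.span_insert, Ideal.sup_mul, Ideal.mul_sup, Ideal.mul_sup,
        Ideal.span_singleton_mul_span_singleton, Ideal.span_singleton_mul_span_singleton,
        Ideal.span_singleton_mul_span_singleton, Ideal.span_singleton_mul_span_singleton]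
      simp only [sup_le_iff]
      refine ⟨⟨?_, ?_⟩, ?_, ?_⟩ <;> rw [Ideal.span_singleton_le_span_singleton]
      · exact ⟨2, by ring⟩
      · exact ⟨σ, by ring⟩
      · exact ⟨σ, by ring⟩
      · exact ⟨-7, by rw [hσ2]; ring⟩
    · rw [Ideal.span_le, Set.singleton_subset_iff]
      have h22 : (2 : 𝓞 E) * 2 ∈ J ^ 2 := by
        rw [pow_two]
        exact Ideal.mul_mem_mul (Ideal.subset_span (by simp)) (Ideal.subset_span (by simp))
      have hσσ : σ * σ ∈ J ^ 2 := by
        rw [pow_two]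
        exact Ideal.mul_mem_mul (Ideal.subset_span (by simp)) (Ideal.subset_span (by simp))
      have key : (2 : 𝓞 E) = 4 * (2 * 2) + σ * σ := by rw [hσ2]; ring
      rw [key]
      exact Ideal.add_mem _ (Ideal.mul_mem_left _ _ h22) hσσ
  -- absNorm of span{2} is 4
  have habs2 : Ideal.absNorm (Ideal.span {(2 : 𝓞 E)}) = 4 := by
    rw [Ideal.absNorm_span_singleton]
    have hcoe : ((Algebra.norm ℤ (2 : 𝓞 E) : ℤ) : ℚ) = Algebra.norm ℚ ((2 : 𝓞 E) : E) :=
      Algebra.coe_norm_int _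
    have h2E : ((2 : 𝓞 E) : E) = algebraMap ℚ E 2 := by
      rw [RingOfIntegers.coe_eq_algebraMap, map_ofNat, map_ofNat]
    rw [h2E, Algebra.norm_algebraMap, hrank] at hcoe
    have : (Algebra.norm ℤ (2 : 𝓞 E) : ℤ) = 4 := by exact_mod_cast hcoe
    rw [this]; rfl
  have habsJ : Ideal.absNorm J = 2 := by
    have : Ideal.absNorm (J ^ 2) = 4 := by rw [hJsq]; exact habs2
    rw [map_pow] at this
    nlinarith [this]
  -- P = J
  have hPJ : P = J := by
    have hdvd : P ∣ J := Ideal.dvd_iff_le.mpr hJP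
    obtain ⟨C, hC⟩ := hdvd
    have habs : Ideal.absNorm P * Ideal.absNorm C = 2 := by
      rw [← map_mul, ← hC, habsJ]
    have hP0 : Ideal.absNorm P ≠ 0 := by
      rw [Ne, Ideal.absNorm_eq_zero_iff]; exact hPbot
    have hP1 : Ideal.absNorm P ≠ 1 := by
      rw [Ne, Ideal.absNorm_eq_one_iff]; exact hP.ne_top
    have hd : Ideal.absNorm P ∣ 2 := ⟨_, habs.symm⟩
    have : Ideal.absNorm P = 2 := by
      rcases (Nat.prime_two.eq_one_or_self_of_dvd _ hd) with h | h
      · exact absurd h hP1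
      · exact h
    have hC1 : Ideal.absNorm C = 1 := by
      rw [this] at habs; omega
    rw [Ideal.absNorm_eq_one_iff] at hC1
    rw [hC, hC1, Ideal.mul_top]
  have hPsq : P ^ 2 = Ideal.span {(2 : 𝓞 E)} := by rw [hPJ, hJsq]
  have habsP : Ideal.absNorm P = 2 := by rw [hPJ, habsJ]
  -- not principal
  have hnp : ¬ P.IsPrincipal := by
    rintro ⟨α, hα⟩
    have hnorm : (Algebra.norm ℤ α).natAbs = 2 := by
      rw [← Ideal.absNorm_span_singleton, ← Ideal.submodule_span_eq, ← hα, habsP]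
    apply no_norm_two s hs hrank (α : E) (RingOfIntegers.isIntegral_coe α)
    rcases Int.natAbs_eq_iff.mp hnorm with h | h
    · left
      have := Algebra.coe_norm_int α
      rw [h] at this; rw [← this]; norm_num
    · right
      have := Algebra.coe_norm_int α
      rw [h] at this; rw [← this]; norm_num
  refine ⟨⟨⟨2, by rw [hPsq, Ideal.submodule_span_eq]⟩⟩, hnp, ?_⟩
  intro h
  haveI : Fact (Nat.Prime 2) := ⟨Nat.prime_two⟩
  apply orderOf_eq_prime
  · rw [← map_pow]
    have hmem : P ^ 2 ∈ nonZeroDivisors (Ideal (𝓞 E)) := pow_mem h 2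
    have heq : (⟨P, h⟩ : ↥(nonZeroDivisors (Ideal (𝓞 E)))) ^ 2 = ⟨P ^ 2, hmem⟩ := rfl
    rw [heq, ClassGroup.mk0_eq_one_iff]
    exact ⟨⟨2, by rw [hPsq, Ideal.submodule_span_eq]⟩⟩
  · intro hone
    rw [ClassGroup.mk0_eq_one_iff] at hone
    exact hnp hone
end

section
/- In E = Q(√(-14)), the prime ideal P_7 above 7 (where 7 ramifies, (7) = P_7^2) is not principal and its ideal class has order 2 in the class group. -/
/-!
Let `ω = √-14 ∈ 𝓞 E`. Since `ω² = 7 · (-2)` with `7` and `-2` coprime, `(7, ω)² = (7)`; as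
`[E : ℚ] = 2` the ideal `(7, ω)` has norm `7`, so it is the prime `P`, and the class of `P` has order
dividing `2`. It is not principal: writing `α = a + c ω` with `a, c ∈ ℚ`, the integers
`N(α + 1) - N(α) - 1 = 2a` and `N(α + ω) - N(α) - 14 = 28c` satisfy `14 (2a)² + (28c)² = 56 N(α)`,
and `14 t² + u² = 392` has no integer solution, so no integer of `E` has norm `±7`.
-/

open NumberField

namespace QuadraticAlgebra

theorem algebraNorm_eq_norm {R : Type*} [CommRing R] {a b : R} (z : QuadraticAlgebra R a b) :
    Algebra.norm R z = z.norm :=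
  det_toLinearMap_eq_norm z

section equivOfSqEq

variable {K E : Type*} [Field K] [Field E] [Algebra K E] {d : K}
  [Fact (∀ r : K, r ^ 2 ≠ d + 0 * r)] {s : E}

noncomputable def equivOfSqEq (hs : s ^ 2 = algebraMap K E d)
    (hgen : IntermediateField.adjoin K {s} = ⊤) : QuadraticAlgebra K d 0 ≃ₐ[K] E :=
  let f := lift ⟨s, by rw [← sq, hs, zero_smul, add_zero, Algebra.algebraMap_eq_smul_one]⟩
  AlgEquiv.ofBijective f ⟨f.toRingHom.injective, AlgHom.fieldRange_eq_top.mp <| by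
    rw [eq_top_iff, ← hgen, IntermediateField.adjoin_simple_le_iff]
    exact ⟨ω, by simp [f]⟩⟩

@[simp]
theorem equivOfSqEq_omega (hs : s ^ 2 = algebraMap K E d)
    (hgen : IntermediateField.adjoin K {s} = ⊤) : equivOfSqEq hs hgen ω = s := by
  show lift (A := E) _ ω = s
  simp

end equivOfSqEq

end QuadraticAlgebra

theorem Ideal.span_pair_sq_eq {R : Type*} [CommRing R] {p ω m : R} (hω : ω ^ 2 = p * m)
    (hpm : IsCoprime p m) : Ideal.span {p, ω} ^ 2 = Ideal.span {p} := by
  obtain ⟨u, v, huv⟩ := hpm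
  rw [sq, Ideal.span_pair_mul_span_pair]
  apply le_antisymm
  · simp only [Ideal.span_le, Set.insert_subset_iff, Set.singleton_subset_iff, SetLike.mem_coe,
      Ideal.mem_span_singleton]
    exact ⟨dvd_mul_right p p, dvd_mul_right p ω, dvd_mul_left p ω, ⟨m, by rw [← sq, hω]⟩⟩
  · rw [Ideal.span_singleton_le_iff_mem]
    have hp : p = u * (p * p) + v * (ω * ω) := by linear_combination (-p) * huv - v * hω
    have hmem : u * (p * p) + v * (ω * ω) ∈ Ideal.span {p * p, p * ω, ω * p, ω * ω} :=
      add_mem (Ideal.mul_mem_left _ _ (Ideal.subset_span (by simp)))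
        (Ideal.mul_mem_left _ _ (Ideal.subset_span (by simp)))
    rwa [← hp] at hmem

theorem Ideal.eq_of_le_of_prime_absNorm {S : Type*} [CommRing S] [IsDedekindDomain S]
    [Module.Free ℤ S] [Module.Finite ℤ S] {I P : Ideal S} [P.IsPrime] (hIP : I ≤ P)
    (hI : (Ideal.absNorm I).Prime) : I = P := by
  have : I.IsPrime := Ideal.isPrime_of_irreducible_absNorm hI.prime.irreducible
  have hIbot : I ≠ ⊥ := by rintro rfl; simp [Nat.not_prime_zero] at hI
  exact (this.isMaximal hIbot).eq_of_le (Ideal.IsPrime.ne_top ‹_›) hIP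

theorem Ideal.absNorm_eq_of_sq_eq_span {K : Type*} [Field K] [NumberField K]
    (hK : Module.finrank ℚ K = 2) {I : Ideal (𝓞 K)} {p : ℕ}
    (hI : I ^ 2 = Ideal.span {(p : 𝓞 K)}) : Ideal.absNorm I = p := by
  have h : Ideal.absNorm I ^ 2 = p ^ 2 := by
    rw [← map_pow, hI, Ideal.absNorm_span_natCast, RingOfIntegers.rank, hK]
  exact Nat.pow_left_injective two_ne_zero h

theorem Ideal.eq_span_pair_of_sq_eq {K : Type*} [Field K] [NumberField K]
    (hK : Module.finrank ℚ K = 2) {p : ℕ} (hp : p.Prime) {ω m : 𝓞 K} (hω : ω ^ 2 = p * m)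
    (hpm : IsCoprime (p : 𝓞 K) m) {P : Ideal (𝓞 K)} [hP : P.IsPrime] (hpP : (p : 𝓞 K) ∈ P) :
    P = Ideal.span {(p : 𝓞 K), ω} := by
  have hωP : ω ∈ P := hP.mem_of_pow_mem 2 (hω ▸ P.mul_mem_right _ hpP)
  refine (Ideal.eq_of_le_of_prime_absNorm ?_ ?_).symm
  · simp [Ideal.span_le, Set.insert_subset_iff, hpP, hωP]
  · rwa [Ideal.absNorm_eq_of_sq_eq_span hK (Ideal.span_pair_sq_eq hω hpm)]

theorem ClassGroup.orderOf_mk0_eq_two {R : Type*} [CommRing R] [IsDedekindDomain R]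
    {I : Ideal R} (hI : I ∈ nonZeroDivisors (Ideal R)) (hnp : ¬ I.IsPrincipal)
    (hsq : (I ^ 2).IsPrincipal) : orderOf (ClassGroup.mk0 ⟨I, hI⟩) = 2 := by
  have : Fact (Nat.Prime 2) := ⟨Nat.prime_two⟩
  refine orderOf_eq_prime ?_ (mt (ClassGroup.mk0_eq_one_iff hI).mp hnp)
  rw [← map_pow]
  exact (ClassGroup.mk0_eq_one_iff (pow_mem hI 2)).mpr hsq

theorem exists_mul_sq_sub_sq_eq_norm {E : Type*} [Field E] [NumberField E] {d : ℚ}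
    (e : QuadraticAlgebra ℚ d 0 ≃ₐ[ℚ] E) {ω : 𝓞 E} (hω : (ω : E) = e QuadraticAlgebra.omega)
    (α : 𝓞 E) : ∃ t u : ℤ, d * t ^ 2 - u ^ 2 = 4 * d * Algebra.norm ℤ α := by
  have hnorm (x : 𝓞 E) : (Algebra.norm ℤ x : ℚ) = (e.symm x).norm := by
    rw [Algebra.coe_norm_int, ← QuadraticAlgebra.algebraNorm_eq_norm, Algebra.norm_eq_of_algEquiv]
  -- With `e.symm α = a + c ω`, these are `2 a` and `-2 d c`.
  refine ⟨Algebra.norm ℤ (α + 1) - Algebra.norm ℤ α - Algebra.norm ℤ (1 : 𝓞 E),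
    Algebra.norm ℤ (α + ω) - Algebra.norm ℤ α - Algebra.norm ℤ ω, ?_⟩
  push_cast
  simp only [hnorm, map_add, map_one, hω, AlgEquiv.symm_apply_apply, QuadraticAlgebra.norm_def,
    QuadraticAlgebra.re_add, QuadraticAlgebra.im_add, QuadraticAlgebra.re_one,
    QuadraticAlgebra.im_one, QuadraticAlgebra.omega_re, QuadraticAlgebra.omega_im]
  ring

theorem fourteen_mul_sq_add_sq_ne (t u : ℤ) : 14 * t ^ 2 + u ^ 2 ≠ 392 := by
  rw [← Int.natAbs_sq t, ← Int.natAbs_sq u]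
  intro h
  have h' : 14 * t.natAbs ^ 2 + u.natAbs ^ 2 = 392 := by exact_mod_cast h
  have ht : t.natAbs < 6 := by nlinarith
  have hu : u.natAbs < 20 := by nlinarith
  have key : ∀ a < 6, ∀ b < 20, 14 * a ^ 2 + b ^ 2 ≠ 392 := by decide
  exact key _ ht _ hu h'

theorem natAbs_norm_ne_seven {E : Type*} [Field E] [NumberField E]
    (e : QuadraticAlgebra ℚ (-14) 0 ≃ₐ[ℚ] E) {ω : 𝓞 E} (hω : (ω : E) = e QuadraticAlgebra.omega)
    (α : 𝓞 E) : (Algebra.norm ℤ α).natAbs ≠ 7 := by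
  obtain ⟨t, u, htu⟩ := exists_mul_sq_sub_sq_eq_norm e hω α
  have htu' : 14 * t ^ 2 + u ^ 2 = 56 * Algebra.norm ℤ α := by qify; linarith
  intro h7
  rcases Int.natAbs_eq_iff.mp h7 with hN | hN <;> rw [hN] at htu'
  · exact fourteen_mul_sq_add_sq_ne t u (by simpa using htu')
  · push_cast at htu'
    nlinarith [sq_nonneg t, sq_nonneg u]

theorem prime_above_seven_order_two_general
    (E : Type*) [Field E] [NumberField E]
    (s : E) (hs : s ^ 2 = -14)
    (hgen : IntermediateField.adjoin ℚ {s} = ⊤)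
    (P : Ideal (𝓞 E)) (hP : P.IsPrime)
    (h7 : (7 : 𝓞 E) ∈ P) :
    ¬ P.IsPrincipal ∧
      ∀ h : P ∈ nonZeroDivisors (Ideal (𝓞 E)),
        orderOf (ClassGroup.mk0 ⟨P, h⟩) = 2 := by
  have : Fact (∀ r : ℚ, r ^ 2 ≠ -14 + 0 * r) := ⟨fun r => by nlinarith [sq_nonneg r]⟩
  let e := QuadraticAlgebra.equivOfSqEq (d := (-14 : ℚ)) (hs.trans (by simp)) hgen
  have hrank : Module.finrank ℚ E = 2 :=
    e.toLinearEquiv.finrank_eq.symm.trans (QuadraticAlgebra.finrank_eq_two _ _)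
  let ω : 𝓞 E := ⟨s, .of_pow two_pos (by rw [hs]; exact_mod_cast (-14 : 𝓞 E).isIntegral_coe)⟩
  have hω : ω ^ 2 = (7 : ℕ) * -2 := RingOfIntegers.ext <| by
    show s ^ 2 = (((7 : ℕ) * -2 : 𝓞 E) : E)
    rw [hs]
    norm_num [map_ofNat]
  have hcop : IsCoprime ((7 : ℕ) : 𝓞 E) (-2) := ⟨1, 3, by norm_num⟩
  have hPeq : P = Ideal.span {((7 : ℕ) : 𝓞 E), ω} :=
    Ideal.eq_span_pair_of_sq_eq hrank Nat.prime_seven hω hcop (by exact_mod_cast h7)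
  have hsq : P ^ 2 = Ideal.span {((7 : ℕ) : 𝓞 E)} := hPeq ▸ Ideal.span_pair_sq_eq hω hcop
  have hnp : ¬ P.IsPrincipal := by
    rintro ⟨α, hα⟩
    refine natAbs_norm_ne_seven e (ω := ω) (QuadraticAlgebra.equivOfSqEq_omega _ hgen).symm α ?_
    rw [← Ideal.absNorm_span_singleton, ← Ideal.submodule_span_eq, ← hα,
      Ideal.absNorm_eq_of_sq_eq_span hrank hsq]
  exact ⟨hnp, fun h => ClassGroup.orderOf_mk0_eq_two h hnp (hsq ▸ ⟨_, rfl⟩)⟩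

theorem prime_above_seven_order_two
    (E : Type*) [Field E] [NumberField E]
    (s : E) (hs : s ^ 2 = -14)
    (hgen : IntermediateField.adjoin ℚ {s} = ⊤)
    (P : Ideal (𝓞 E)) (hP : P.IsPrime) (hPbot : P ≠ ⊥)
    (h7 : (7 : 𝓞 E) ∈ P) :
    ¬ P.IsPrincipal ∧
      ∀ h : P ∈ nonZeroDivisors (Ideal (𝓞 E)),
        orderOf (ClassGroup.mk0 ⟨P, h⟩) = 2 :=
  prime_above_seven_order_two_general E s hs hgen P hP h7
end

section
/- Let F = Q(√(-59)) and E = F(√(-2)). Then O_F + O_F·√(-2) = O_E, i.e., {a + b√(-2) : a, b ∈ O_F} is the full ring of integers of E. -/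
/-!
Write `x = a + b s` with `a, b ∈ F = ℚ(r)` and let `σ` be the conjugation `s ↦ -s` over `F`.
If `x` is integral, so are `2a = x + σx` and `a² + 2b² = x σx`. Since `2` is unramified in `F`
(its ring of integers is `ℤ[(1 + r)/2]`, found with the conjugation `r ↦ -r`), an element `δ ∈ F`
with `2δ²` integral is integral. Applying this to `2b`, `a`, `b` in turn, via
`2(2b)² = 4(a² + 2b²) - (2a)²`, `2a² = 2(a² + 2b²) - (2b)²` and `2b² = (a² + 2b²) - a²`,
shows that `a` and `b` are integral.
-/

open Polynomial IntermediateField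

section QuadraticExtension

variable {K E : Type*} [Field K] [Field E] [Algebra K E] {r s : E} {c d : K}

theorem exists_eq_add_mul_of_mem_adjoin_simple (hs : s ^ 2 = algebraMap K E d) {x : E}
    (hx : x ∈ K⟮s⟯) : ∃ a b : K, x = algebraMap K E a + algebraMap K E b * s := by
  have hsalg : IsAlgebraic K s :=
    ⟨X ^ 2 - C d, X_pow_sub_C_ne_zero two_pos d, by simp [hs]⟩
  rw [← mem_toSubalgebra, adjoin_simple_toSubalgebra_of_isAlgebraic hsalg] at hx
  induction hx using Algebra.adjoin_induction with
  | mem y hy => exact ⟨0, 1, by rw [Set.mem_singleton_iff.mp hy]; simp⟩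
  | algebraMap a => exact ⟨a, 0, by simp⟩
  | add y z _ _ hy hz =>
    obtain ⟨a, b, rfl⟩ := hy
    obtain ⟨a', b', rfl⟩ := hz
    exact ⟨a + a', b + b', by simp only [map_add]; ring⟩
  | mul y z _ _ hy hz =>
    obtain ⟨a, b, rfl⟩ := hy
    obtain ⟨a', b', rfl⟩ := hz
    refine ⟨a * a' + b * b' * d, a * b' + b * a', ?_⟩
    simp only [map_add, map_mul]
    linear_combination algebraMap K E b * algebraMap K E b' * hs

theorem notMem_range_of_sq_eq (hs : s ^ 2 = algebraMap K E d) (hd : ¬IsSquare d) :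
    s ∉ (algebraMap K E).range := by
  rintro ⟨a, rfl⟩
  exact hd ⟨a, (algebraMap K E).injective (by rw [← hs]; simp [sq])⟩

theorem minpoly_eq_X_sq_sub_C (hs : s ^ 2 = algebraMap K E d)
    (hsK : s ∉ (algebraMap K E).range) : minpoly K s = X ^ 2 - C d := by
  refine (minpoly.eq_of_irreducible_of_monic ?_ (by simp [hs])
    (monic_X_pow_sub_C d two_ne_zero)).symm
  refine X_pow_sub_C_irreducible_of_prime Nat.prime_two fun b hb => hsK ?_
  have : (s - algebraMap K E b) * (s + algebraMap K E b) = 0 := by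
    rw [← hb, map_pow] at hs
    linear_combination hs
  rcases mul_eq_zero.mp this with h | h
  · exact ⟨b, (sub_eq_zero.mp h).symm⟩
  · exact ⟨-b, by rw [map_neg, eq_neg_of_add_eq_zero_left h]⟩

theorem exists_algHom_apply_eq_neg (hs : s ^ 2 = algebraMap K E d)
    (hsK : s ∉ (algebraMap K E).range) (htop : K⟮s⟯ = ⊤) : ∃ σ : E →ₐ[K] E, σ s = -s := by
  have hint : IsIntegral K s := .of_pow two_pos (hs ▸ isIntegral_algebraMap)
  have hroot : -s ∈ (minpoly K s).aroots E := by
    rw [minpoly_eq_X_sq_sub_C hs hsK, mem_aroots]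
    exact ⟨X_pow_sub_C_ne_zero two_pos d, by simp [hs]⟩
  let φ := (algHomAdjoinIntegralEquiv K hint).symm ⟨-s, hroot⟩
  refine ⟨(φ.comp (equivOfEq htop.symm).toAlgHom).comp topEquiv.symm.toAlgHom, ?_⟩
  exact algHomAdjoinIntegralEquiv_symm_apply_gen K hint ⟨-s, hroot⟩

theorem notMem_adjoin_simple_of_sq_eq [NeZero (2 : K)] (hr : r ^ 2 = algebraMap K E c)
    (hs : s ^ 2 = algebraMap K E d) (hc : ¬IsSquare c) (hd : ¬IsSquare d)
    (hcd : ¬IsSquare (c * d)) : s ∉ K⟮r⟯ := by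
  intro hsr
  obtain ⟨a, b, rfl⟩ := exists_eq_add_mul_of_mem_adjoin_simple hr hsr
  have hexp : algebraMap K E (a ^ 2 + b ^ 2 * c - d) + algebraMap K E (2 * a * b) * r = 0 := by
    simp only [map_add, map_sub, map_mul, map_pow, map_ofNat]
    linear_combination hs - algebraMap K E b ^ 2 * hr
  by_cases hab : 2 * a * b = 0
  · rw [hab, map_zero, zero_mul, add_zero, map_eq_zero_iff _ (algebraMap K E).injective] at hexp
    rcases mul_eq_zero.mp hab with ha | rfl
    · obtain rfl : a = 0 := (mul_eq_zero.mp ha).resolve_left two_ne_zero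
      exact hcd ⟨b * c, by linear_combination -c * hexp⟩
    · exact hd ⟨a, by linear_combination -hexp⟩
  · refine notMem_range_of_sq_eq hr hc ⟨-(a ^ 2 + b ^ 2 * c - d) / (2 * a * b), ?_⟩
    rw [map_div₀, map_neg, div_eq_iff ((_root_.map_ne_zero _).mpr hab)]
    linear_combination -hexp

theorem adjoin_adjoin_simple_eq_top (htop : K⟮r, s⟯ = ⊤) : K⟮r⟯⟮s⟯ = ⊤ := by
  apply restrictScalars_injective K
  rw [adjoin_simple_adjoin_simple, restrictScalars_top, htop]

theorem exists_algHom_adjoin_apply_eq_neg [NeZero (2 : K)] (hr : r ^ 2 = algebraMap K E c)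
    (hs : s ^ 2 = algebraMap K E d) (hc : ¬IsSquare c) (hd : ¬IsSquare d)
    (hcd : ¬IsSquare (c * d)) (htop : K⟮r, s⟯ = ⊤) : ∃ σ : E →ₐ[K⟮r⟯] E, σ s = -s := by
  refine exists_algHom_apply_eq_neg (d := algebraMap K K⟮r⟯ d) hs ?_ ?_
  · rintro ⟨t, rfl⟩
    exact notMem_adjoin_simple_of_sq_eq hr hs hc hd hcd t.2
  · exact adjoin_adjoin_simple_eq_top htop

end QuadraticExtension

theorem isIntegral_of_sq_eq_intCast {R : Type*} [Ring R] {x : R} {n : ℤ} (h : x ^ 2 = n) :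
    IsIntegral ℤ x :=
  .of_pow two_pos (h ▸ isIntegral_algebraMap (x := n))

theorem exists_intCast_eq_of_isIntegral_ratCast {E : Type*} [Field E] [CharZero E] {c : ℚ}
    (h : IsIntegral ℤ (c : E)) : ∃ n : ℤ, n = c := by
  rw [← eq_ratCast (algebraMap ℚ E), isIntegral_algebraMap_iff (algebraMap ℚ E).injective,
    IsIntegrallyClosed.isIntegral_iff] at h
  exact h

theorem exists_intCast_eq_of_mul_sq_eq {p : ℕ} (hp : p.Prime) {q : ℚ} {n : ℤ}
    (h : p * q ^ 2 = n) : ∃ m : ℤ, m = q := by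
  obtain ⟨k, hk⟩ : ∃ k : ℤ, k = p * q := by
    refine exists_intCast_eq_of_isIntegral_ratCast (E := ℚ) (IsIntegral.of_pow two_pos ?_)
    rw [Rat.cast_id, mul_pow, sq (p : ℚ), mul_assoc, h]
    exact_mod_cast isIntegral_algebraMap (x := (p * n : ℤ))
  have hp' : Prime (p : ℤ) := Nat.prime_iff_prime_int.mp hp
  obtain ⟨m, rfl⟩ : (p : ℤ) ∣ k := hp'.dvd_of_dvd_pow (n := 2) ⟨n, by
    have : ((k ^ 2 : ℤ) : ℚ) = ((p * n : ℤ) : ℚ) := by push_cast; rw [hk, ← h]; ring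
    exact_mod_cast this⟩
  refine ⟨m, mul_left_cancel₀ (Nat.cast_ne_zero.mpr hp.ne_zero) ?_⟩
  rw [← hk]; push_cast; ring

section

variable {E : Type*} [Field E] [CharZero E] {r : E}

theorem isIntegral_one_add_div_two (hr : r ^ 2 = -59) : IsIntegral ℤ ((1 + r) / 2) := by
  refine ⟨X ^ 2 - X + C 15, ?_, ?_⟩
  · monicity!
  · simp only [algebraMap_int_eq, eq_intCast, Int.cast_ofNat, eval₂_add, eval₂_sub, eval₂_X_pow,
      eval₂_X, eval₂_ofNat]
    linear_combination hr / 4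

theorem isIntegral_add_mul_one_add_div_two_iff (hr : r ^ 2 = -59) (τ : E →+* E) (hτ : τ r = -r)
    (p q : ℚ) : IsIntegral ℤ ((p : E) + q * ((1 + r) / 2)) ↔ ∃ a b : ℤ, a = p ∧ b = q := by
  constructor
  · intro hz
    set z : E := (p : E) + q * ((1 + r) / 2)
    have hτz : τ z = p + q * (1 - (1 + r) / 2) := by
      simp only [z, map_add, map_mul, map_div₀, map_one, map_ofNat, map_ratCast, hτ]; ring
    have hτint : IsIntegral ℤ (τ z) := hz.map τ.toIntAlgHom
    obtain ⟨t, ht⟩ : ∃ t : ℤ, t = 2 * p + q := by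
      refine exists_intCast_eq_of_isIntegral_ratCast (E := E) ?_
      have : ((2 * p + q : ℚ) : E) = z + τ z := by
        rw [hτz]; push_cast; ring
      exact this ▸ hz.add hτint
    obtain ⟨n, hn⟩ : ∃ n : ℤ, n = p ^ 2 + p * q + 15 * q ^ 2 := by
      refine exists_intCast_eq_of_isIntegral_ratCast (E := E) ?_
      have : ((p ^ 2 + p * q + 15 * q ^ 2 : ℚ) : E) = z * τ z := by
        rw [hτz]; push_cast; linear_combination (q ^ 2 / 4 : E) * hr
      exact this ▸ hz.mul hτint
    obtain ⟨b, rfl⟩ := exists_intCast_eq_of_mul_sq_eq (by norm_num : Nat.Prime 59)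
      (q := q) (n := 4 * n - t ^ 2) (by push_cast; rw [hn, ht]; ring)
    obtain ⟨a, ha⟩ : Even (t - b) := by
      have : Even (t ^ 2 + 59 * b ^ 2) := ⟨2 * n, by
        have : ((t ^ 2 + 59 * b ^ 2 : ℤ) : ℚ) = ((2 * n + 2 * n : ℤ) : ℚ) := by
          push_cast; rw [hn, ht]; ring
        exact_mod_cast this⟩
      simpa [parity_simps, show ¬Even (59 : ℤ) by decide] using this
    refine ⟨a, b, ?_, rfl⟩
    have : ((t - b : ℤ) : ℚ) = ((a + a : ℤ) : ℚ) := congrArg _ ha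
    push_cast at this; linarith
  · rintro ⟨a, b, rfl, rfl⟩
    push_cast
    exact isIntegral_algebraMap.add (isIntegral_algebraMap.mul (isIntegral_one_add_div_two hr))

theorem exists_eq_add_mul_one_add_div_two (hr : r ^ 2 = -59) {δ : E} (hδ : δ ∈ ℚ⟮r⟯) :
    ∃ p q : ℚ, δ = p + q * ((1 + r) / 2) := by
  obtain ⟨u, v, rfl⟩ := exists_eq_add_mul_of_mem_adjoin_simple (d := -59) (by simp [hr]) hδ
  exact ⟨u - v, 2 * v, by simp only [eq_ratCast]; push_cast; ring⟩

theorem isIntegral_of_isIntegral_two_mul_sq (hr : r ^ 2 = -59) (τ : E →+* E) (hτ : τ r = -r)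
    {δ : E} (hδ : δ ∈ ℚ⟮r⟯) (h : IsIntegral ℤ (2 * δ ^ 2)) : IsIntegral ℤ δ := by
  have hchar := isIntegral_add_mul_one_add_div_two_iff hr τ hτ
  obtain ⟨p, q, rfl⟩ := exists_eq_add_mul_one_add_div_two hr hδ
  obtain ⟨A, B, hA, hB⟩ := (hchar (2 * p) (2 * q)).mp <| IsIntegral.of_pow two_pos <| by
    have h2 : IsIntegral ℤ (2 : E) := by exact_mod_cast isIntegral_natCast 2
    have hsq : ((((2 * p : ℚ) : E) + ((2 * q : ℚ) : E) * ((1 + r) / 2)) ^ 2) =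
        2 * (2 * ((p : E) + q * ((1 + r) / 2)) ^ 2) := by push_cast; ring
    exact hsq ▸ h2.mul h
  rw [show p = A / 2 by linarith, show q = B / 2 by linarith] at h ⊢
  obtain ⟨C, D, hC, hD⟩ := (hchar ((A ^ 2 - 15 * B ^ 2) / 2) ((2 * A * B + B ^ 2) / 2)).mp <| by
    have hsq : 2 * (((A / 2 : ℚ) : E) + ((B / 2 : ℚ) : E) * ((1 + r) / 2)) ^ 2 =
        (((A ^ 2 - 15 * B ^ 2) / 2 : ℚ) : E) +
          (((2 * A * B + B ^ 2) / 2 : ℚ) : E) * ((1 + r) / 2) := by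
      push_cast
      linear_combination ((B : E) ^ 2 / 8) * hr
    exact hsq ▸ h
  have hBeven : Even B := by
    have : Even (2 * A * B + B ^ 2) := ⟨D, by
      have : ((2 * A * B + B ^ 2 : ℤ) : ℚ) = ((D + D : ℤ) : ℚ) := by push_cast; rw [hD]; ring
      exact_mod_cast this⟩
    simpa [parity_simps] using this
  have hAeven : Even A := by
    have : Even (A ^ 2 - 15 * B ^ 2) := ⟨C, by
      have : ((A ^ 2 - 15 * B ^ 2 : ℤ) : ℚ) = ((C + C : ℤ) : ℚ) := by push_cast; rw [hC]; ring
      exact_mod_cast this⟩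
    simpa [parity_simps, hBeven] using this
  obtain ⟨a, rfl⟩ := hAeven
  obtain ⟨b, rfl⟩ := hBeven
  exact (hchar _ _).mpr ⟨a, b, by push_cast; ring, by push_cast; ring⟩

end

theorem isIntegral_and_isIntegral_of_isIntegral_add_mul {E : Type*} [Field E] [CharZero E]
    {r s : E} (hr : r ^ 2 = -59) (hs : s ^ 2 = -2) (τ : E →+* E) (hτ : τ r = -r)
    (σ : E →+* E) (hσ : σ s = -s) {a b : E} (ha : a ∈ ℚ⟮r⟯) (hb : b ∈ ℚ⟮r⟯) (hσa : σ a = a)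
    (hσb : σ b = b) (hx : IsIntegral ℤ (a + b * s)) : IsIntegral ℤ a ∧ IsIntegral ℤ b := by
  have hσx : IsIntegral ℤ (a - b * s) := by
    simpa [hσa, hσb, hσ, sub_eq_add_neg] using hx.map σ.toIntAlgHom
  have h2 : IsIntegral ℤ (2 : E) := by exact_mod_cast isIntegral_natCast 2
  have h2a : IsIntegral ℤ (2 * a) := by
    rw [show 2 * a = (a + b * s) + (a - b * s) by ring]
    exact hx.add hσx
  have hN : IsIntegral ℤ (a ^ 2 + 2 * b ^ 2) := by
    rw [show a ^ 2 + 2 * b ^ 2 = (a + b * s) * (a - b * s) by linear_combination b ^ 2 * hs]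
    exact hx.mul hσx
  have h2b : IsIntegral ℤ (2 * b) := by
    refine isIntegral_of_isIntegral_two_mul_sq hr τ hτ (mul_mem (ofNat_mem _ 2) hb) ?_
    rw [show 2 * (2 * b) ^ 2 = 2 * 2 * (a ^ 2 + 2 * b ^ 2) - (2 * a) ^ 2 by ring]
    exact ((h2.mul h2).mul hN).sub (h2a.pow 2)
  have ha' : IsIntegral ℤ a := by
    refine isIntegral_of_isIntegral_two_mul_sq hr τ hτ ha ?_
    rw [show 2 * a ^ 2 = 2 * (a ^ 2 + 2 * b ^ 2) - (2 * b) ^ 2 by ring]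
    exact (h2.mul hN).sub (h2b.pow 2)
  refine ⟨ha', isIntegral_of_isIntegral_two_mul_sq hr τ hτ hb ?_⟩
  rw [show 2 * b ^ 2 = (a ^ 2 + 2 * b ^ 2) - a ^ 2 by ring]
  exact hN.sub (ha'.pow 2)

theorem ringOfIntegers_of_biquadratic
    (E : Type*) [Field E] [NumberField E]
    (r s : E) (hr : r ^ 2 = -59) (hs : s ^ 2 = -2)
    (hgen : IntermediateField.adjoin ℚ {r, s} = ⊤) :
    ∀ x : E, IsIntegral ℤ x ↔
      ∃ a b : E, a ∈ IntermediateField.adjoin ℚ {r} ∧ b ∈ IntermediateField.adjoin ℚ {r} ∧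
        IsIntegral ℤ a ∧ IsIntegral ℤ b ∧ x = a + b * s := by
  have hr' : r ^ 2 = algebraMap ℚ E (-59) := by simp [hr]
  have hs' : s ^ 2 = algebraMap ℚ E (-2) := by simp [hs]
  obtain ⟨σ, hσ⟩ := exists_algHom_adjoin_apply_eq_neg hr' hs' (by norm_num) (by norm_num)
    (by norm_num) hgen
  obtain ⟨τ, hτ⟩ := exists_algHom_adjoin_apply_eq_neg hs' hr' (by norm_num) (by norm_num)
    (by norm_num) (by rwa [Set.pair_comm])
  intro x
  constructor
  · intro hx
    have hxF : x ∈ ℚ⟮r⟯⟮s⟯ := by rw [adjoin_adjoin_simple_eq_top hgen]; trivial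
    obtain ⟨a, b, rfl⟩ :=
      exists_eq_add_mul_of_mem_adjoin_simple (d := algebraMap ℚ ℚ⟮r⟯ (-2)) hs' hxF
    obtain ⟨ha, hb⟩ := isIntegral_and_isIntegral_of_isIntegral_add_mul hr hs τ hτ σ hσ a.2 b.2
      (σ.commutes a) (σ.commutes b) hx
    exact ⟨a, b, a.2, b.2, ha, hb, rfl⟩
  · rintro ⟨a, b, -, -, ha, hb, rfl⟩
    exact ha.add (hb.mul (isIntegral_of_sq_eq_intCast (n := -2) (by simp [hs])))
end

section
/- Let F be a number field, d ∈ O_F not a square, E = F(√d), and suppose (x, y), (x', y') ∈ O_{F_p} × O_{F_p} both satisfy a x^2 + b y^2 = α with α ∈ O_F, a b = -d, α a unit at p. Then the quotient (a x + y√d)/(a x' + y'√d) lies in (O_F_p + O_F_p√d)^× and has norm 1 over F_p. -/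
/-- The local quotient of two integral solutions lies in `(O + O√d)ˣ` and has norm one:
here `K` is the local field `F_p`, `O` its valuation ring, and `A` a `K`-algebra
containing a square root `s` of `d`. -/
theorem local_quotient_norm_one
    (K : Type*) [Field K] (O : Subring K)
    (A : Type*) [CommRing A] [Algebra K A]
    (d a b α x y x' y' : K)
    (hd : d ∈ O) (haO : a ∈ O) (hbO : b ∈ O) (hαO : α ∈ O)
    (hxO : x ∈ O) (hyO : y ∈ O) (hx'O : x' ∈ O) (hy'O : y' ∈ O)
    (hab : a * b = -d)
    (hα : ∃ β ∈ O, α * β = 1)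
    (s : A) (hs : s ^ 2 = algebraMap K A d)
    (hsol : a * x ^ 2 + b * y ^ 2 = α)
    (hsol' : a * x' ^ 2 + b * y' ^ 2 = α) :
    ∃ u v : K, u ∈ O ∧ v ∈ O ∧
      (algebraMap K A (a * x) + algebraMap K A y * s) =
        (algebraMap K A u + algebraMap K A v * s) *
          (algebraMap K A (a * x') + algebraMap K A y' * s) ∧
      u ^ 2 - d * v ^ 2 = 1 := by
  obtain ⟨β, hβO, hβ⟩ := hα
  refine ⟨(a * x * x' + b * y * y') * β, (x' * y - x * y') * β, ?_, ?_, ?_, ?_⟩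
  · exact O.mul_mem (O.add_mem (O.mul_mem (O.mul_mem haO hxO) hx'O)
      (O.mul_mem (O.mul_mem hbO hyO) hy'O)) hβO
  · exact O.mul_mem (O.sub_mem (O.mul_mem hx'O hyO) (O.mul_mem hxO hy'O)) hβO
  · set u := (a * x * x' + b * y * y') * β with hu
    set v := (x' * y - x * y') * β with hv
    have h1 : a * x = u * (a * x') + v * y' * d := by
      rw [hu, hv]
      have : α * (a * x) = ((a * x * x' + b * y * y') * (a * x') +
          (x' * y - x * y') * y' * d) := by
        linear_combination (-(a * x)) * hsol' + (x * y' ^ 2 - x' * y * y') * hab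
      linear_combination β * this - (a * x) * hβ
    have h2 : y = u * y' + v * (a * x') := by
      rw [hu, hv]
      have : α * y = (a * x * x' + b * y * y') * y' + (x' * y - x * y') * (a * x') := by
        linear_combination (-y) * hsol'
      linear_combination β * this - y * hβ
    have e1 := congrArg (algebraMap K A) h1
    have e2 := congrArg (algebraMap K A) h2
    simp only [map_mul, map_add, map_sub] at e1 e2 ⊢
    linear_combination e1 + e2 * s - (algebraMap K A v * algebraMap K A y') * hs
  · have key : α * α * (((a * x * x' + b * y * y') * β) ^ 2 -
        d * ((x' * y - x * y') * β) ^ 2) = α * α * (α * β) ^ 2 := by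
      have : (a * x * x' + b * y * y') ^ 2 - d * (x' * y - x * y') ^ 2 = α * α := by
        linear_combination (a * x' ^ 2 + b * y' ^ 2) * hsol + α * hsol'
          - (x' ^ 2 * y ^ 2 + x ^ 2 * y' ^ 2 - 2 * x * x' * y * y') * hab
      linear_combination (α * α * β ^ 2) * this
    have hα0 : α ≠ 0 := fun h => by simp [h] at hβ
    have := mul_left_cancel₀ (mul_ne_zero hα0 hα0) key
    rw [hβ] at this; simpa using this
end
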